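/- arXiv:2306.00916 — 14 statements merged into one kernel-verified Lean document; each statement's English description precedes it below -/
import Mathlib

section
/- Let m ≥ 1 and n₁,…,n_m ≥ 1 be integers, and for each 2 ≤ j ≤ m, 1 ≤ k ≤ n_j and 1 ≤ ℓ ≤ j−1 let β^j_{ℓk} ∈ ℤ/2 be arbitrary. In the polynomial ring A = (ℤ/2)[y₁,…,y_m], let I ⊆ A be the ideal generated by the m elements α_j = y_j · ∏_{k=1}^{n_j} ( y_j + ∑_{ℓ=1}^{j−1} β^j_{ℓk} y_ℓ ) for j = 1,…,m (so α₁ = y₁^{n₁+1}). Then for every j ∈ {1,…,m}, the monomial y_j^{n_j} does not lie in I; equivalently, y_j^{n_j} ≠ 0 in the quotient ring A/I. -/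
open MvPolynomial

/-! Send `y_j ↦ t` and every other `y_i ↦ 0`. A generator `α_i` with `i ≠ j` is a multiple of
`y_i`, so it goes to `0`; in `α_j` every factor `y_j + ∑_{ℓ<j} β y_ℓ` goes to `t`, so `α_j ↦ t^{n_j+1}`.
Hence `I` maps into `(t^{n_j+1}) ⊆ R[t]`, which does not contain the image `t^{n_j}` of `y_j^{n_j}`. -/

lemma aeval_single_add_sum_of_notMem {R σ S : Type*} [CommRing R] [DecidableEq σ] [CommRing S]
    [Algebra R S] {j : σ} (t : S) (c : σ → R) {s : Finset σ} (hj : j ∉ s) :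
    aeval (Pi.single j t) (X j + ∑ l ∈ s, C (c l) * X l) = t := by
  have hzero : ∀ l ∈ s, aeval (Pi.single j t) (C (c l) * X l) = 0 := fun l hl => by
    rw [map_mul, aeval_X, Pi.single_eq_of_ne (ne_of_mem_of_not_mem hl hj), mul_zero]
  rw [map_add, map_sum, Finset.sum_eq_zero hzero, aeval_X, Pi.single_eq_same, add_zero]

section BottRelation

variable {R σ : Type*} [CommRing R] [LinearOrder σ] [Fintype σ]

noncomputable def bottRelation (n : σ → ℕ) (β : σ → ℕ → σ → R) (i : σ) : MvPolynomial σ R :=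
  X i * ∏ k ∈ Finset.range (n i), (X i + ∑ l ∈ Finset.univ.filter (· < i), C (β i k l) * X l)

variable {S : Type*} [CommRing S] [Algebra R S]

lemma aeval_single_bottRelation_self (n : σ → ℕ) (β : σ → ℕ → σ → R) (j : σ) (t : S) :
    aeval (Pi.single j t) (bottRelation n β j) = t ^ (n j + 1) := by
  have hfactor : ∀ k, aeval (Pi.single j t)
      (X j + ∑ l ∈ Finset.univ.filter (· < j), C (β j k l) * X l) = t := fun k =>
    aeval_single_add_sum_of_notMem t _ (by simp)
  rw [bottRelation, map_mul, map_prod, Finset.prod_congr rfl fun k _ => hfactor k, aeval_X,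
    Pi.single_eq_same, Finset.prod_const, Finset.card_range, pow_succ']

lemma aeval_single_bottRelation_of_ne (n : σ → ℕ) (β : σ → ℕ → σ → R) {i j : σ} (hij : i ≠ j)
    (t : S) : aeval (Pi.single j t) (bottRelation n β i) = 0 := by
  rw [bottRelation, map_mul, aeval_X, Pi.single_eq_of_ne hij, zero_mul]

lemma span_bottRelation_le_comap (n : σ → ℕ) (β : σ → ℕ → σ → R) (j : σ) :
    Ideal.span (Set.range (bottRelation n β)) ≤
      (Ideal.span {Polynomial.X ^ (n j + 1)}).comap
        (aeval (R := R) (Pi.single j (Polynomial.X : Polynomial R))) := by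
  rw [Ideal.span_le]
  rintro _ ⟨i, rfl⟩
  rw [SetLike.mem_coe, Ideal.mem_comap]
  obtain rfl | hij := eq_or_ne i j
  · rw [aeval_single_bottRelation_self]
    exact Ideal.mem_span_singleton_self _
  · rw [aeval_single_bottRelation_of_ne n β hij]
    exact zero_mem _

theorem X_pow_notMem_span_bottRelation [Nontrivial R] (n : σ → ℕ) (β : σ → ℕ → σ → R) (j : σ) :
    X j ^ n j ∉ Ideal.span (Set.range (bottRelation n β)) := by
  intro hmem
  have hdvd := Ideal.mem_span_singleton.mp (span_bottRelation_le_comap n β j hmem)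
  rw [map_pow, aeval_X, Pi.single_eq_same, Polynomial.X_pow_dvd_iff] at hdvd
  simpa using hdvd (n j) (Nat.lt_succ_self _)

end BottRelation

theorem stmt_0_general (m : ℕ) (n : Fin m → ℕ)
    (β : Fin m → ℕ → Fin m → ZMod 2)
    (I : Ideal (MvPolynomial (Fin m) (ZMod 2)))
    (hI : I = Ideal.span { α | ∃ j : Fin m,
      α = X j * ∏ k ∈ Finset.range (n j),
        (X j + ∑ l ∈ Finset.univ.filter (· < j), C (β j k l) * X l) })
    (j : Fin m) :
    (X j : MvPolynomial (Fin m) (ZMod 2)) ^ (n j) ∉ I := by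
  have hgen : { α | ∃ j : Fin m, α = X j * ∏ k ∈ Finset.range (n j),
      (X j + ∑ l ∈ Finset.univ.filter (· < j), C (β j k l) * X l) } =
      Set.range (bottRelation n β) := by
    ext α
    exact exists_congr fun _ => eq_comm
  rw [hI, hgen]
  exact X_pow_notMem_span_bottRelation n β j

/-- For a small cover over a product of simplices with Bott-matrix characteristic data,
`y_j^{n_j} ≠ 0` in the mod-2 cohomology ring, i.e. `y_j^{n_j}` is not in the ideal `I`
generated by `α_j = y_j ∏_{k=1}^{n_j} (y_j + ∑_{ℓ<j} β^j_{ℓk} y_ℓ)`. -/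
theorem stmt_0 (m : ℕ) (hm : 1 ≤ m) (n : Fin m → ℕ) (hn : ∀ j, 1 ≤ n j)
    (β : Fin m → ℕ → Fin m → ZMod 2)
    (I : Ideal (MvPolynomial (Fin m) (ZMod 2)))
    (hI : I = Ideal.span { α | ∃ j : Fin m,
      α = X j * ∏ k ∈ Finset.range (n j),
        (X j + ∑ l ∈ Finset.univ.filter (· < j), C (β j k l) * X l) })
    (j : Fin m) :
    (X j : MvPolynomial (Fin m) (ZMod 2)) ^ (n j) ∉ I :=
  stmt_0_general m n β I hI j
end

section
/- Let n₁, n₂ ≥ 1 be integers. Work in the polynomial ring A = (ℤ/2)[y₁,y₂], set n = n₁+n₂, and let I ⊆ A be the ideal generated by y₁^{n₁+1} and y₂·(y₁+y₂)^{n₂}. Then the monomial y₁^{n₁}·y₂^{n₂} does not lie in I; equivalently, y₁^{n₁} y₂^{n₂} ≠ 0 in the quotient ring R = A/I. -/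
/-!
Substitute `y₁ ↦ C t`, `y₂ ↦ X` to land in `B[X]` with `B = R[t]`. There the generator
`g = X (X + C t)^{n₂}` is monic of degree `n₂ + 1`, so reducing modulo `g` fixes the image
`C (t^{n₁}) X^{n₂}` of the monomial, while it sends every multiple of `C (t^{n₁+1})` to a
polynomial whose coefficients are all divisible by `t^{n₁+1}`. Comparing coefficients of
`X^{n₂}` would give `t^{n₁+1} ∣ t^{n₁}`.
-/

namespace Polynomial

variable {R : Type*} [CommRing R]

theorem dvd_coeff_of_mem_span_C_pair_of_degree_lt {r : R} {g p : R[X]} (hg : g.Monic)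
    (hp : p.degree < g.degree) (h : p ∈ Ideal.span {C r, g}) (k : ℕ) : r ∣ p.coeff k := by
  nontriviality R
  obtain ⟨a, b, hab⟩ := Ideal.mem_span_pair.mp h
  have hp_eq : p = r • (a %ₘ g) := by
    rw [← (modByMonic_eq_self_iff hg).2 hp, ← hab, add_modByMonic,
      (modByMonic_eq_zero_iff_dvd hg).2 (dvd_mul_left g b), add_zero, mul_comm,
      ← smul_eq_C_mul, smul_modByMonic]
  rw [hp_eq, coeff_smul, smul_eq_mul]
  exact dvd_mul_right _ _

theorem monic_X_mul_X_add_C_pow (a : R) (n : ℕ) : (X * (X + C a) ^ n).Monic :=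
  monic_X.mul ((monic_X_add_C a).pow n)

theorem natDegree_X_mul_X_add_C_pow [Nontrivial R] (a : R) (n : ℕ) :
    (X * (X + C a) ^ n).natDegree = n + 1 := by
  rw [monic_X.natDegree_mul ((monic_X_add_C a).pow n), natDegree_X,
    (monic_X_add_C a).natDegree_pow, natDegree_X_add_C, mul_one, add_comm]

theorem C_X_pow_mul_X_pow_notMem_span [Nontrivial R] (n₁ n₂ : ℕ) :
    C X ^ n₁ * X ^ n₂ ∉
      Ideal.span ({C X ^ (n₁ + 1), X * (C X + X) ^ n₂} : Set R[X][X]) := by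
  intro hm
  rw [← C_pow, ← C_pow, add_comm (C X)] at hm
  have hdeg : (C (X ^ n₁) * X ^ n₂ : R[X][X]).degree <
      (X * (X + C X) ^ n₂ : R[X][X]).degree := by
    rw [degree_eq_natDegree (monic_X_mul_X_add_C_pow _ n₂).ne_zero,
      natDegree_X_mul_X_add_C_pow]
    exact (degree_C_mul_X_pow_le n₂ _).trans_lt (by exact_mod_cast n₂.lt_succ_self)
  have hdvd := dvd_coeff_of_mem_span_C_pair_of_degree_lt (monic_X_mul_X_add_C_pow _ n₂) hdeg
    hm n₂
  rw [coeff_C_mul_X_pow, if_pos rfl] at hdvd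
  simpa using X_pow_dvd_iff.mp hdvd n₁ n₁.lt_succ_self

end Polynomial

open MvPolynomial

theorem MvPolynomial.X_zero_pow_mul_X_one_pow_notMem_span {R : Type*} [CommRing R]
    [Nontrivial R] (n₁ n₂ : ℕ) :
    (X 0 : MvPolynomial (Fin 2) R) ^ n₁ * X 1 ^ n₂ ∉
      Ideal.span {X 0 ^ (n₁ + 1), X 1 * (X 0 + X 1) ^ n₂} := by
  intro hm
  have hmap := Ideal.mem_map_of_mem
    (aeval (R := R) ![Polynomial.C (Polynomial.X : Polynomial R), Polynomial.X]) hm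
  simp only [Ideal.map_span, Set.image_insert_eq, Set.image_singleton, map_pow, map_mul,
    map_add, aeval_X, Matrix.cons_val_zero, Matrix.cons_val_one] at hmap
  exact Polynomial.C_X_pow_mul_X_pow_notMem_span n₁ n₂ hmap

theorem stmt_1_general (n₁ n₂ : ℕ)
    (I : Ideal (MvPolynomial (Fin 2) (ZMod 2)))
    (hI : I = Ideal.span {X 0 ^ (n₁ + 1), X 1 * (X 0 + X 1) ^ n₂}) :
    (X 0 : MvPolynomial (Fin 2) (ZMod 2)) ^ n₁ * X 1 ^ n₂ ∉ I :=
  hI ▸ X_zero_pow_mul_X_one_pow_notMem_span n₁ n₂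

theorem stmt_1 (n₁ n₂ : ℕ) (h₁ : 1 ≤ n₁) (h₂ : 1 ≤ n₂)
    (I : Ideal (MvPolynomial (Fin 2) (ZMod 2)))
    (hI : I = Ideal.span {X 0 ^ (n₁ + 1), X 1 * (X 0 + X 1) ^ n₂}) :
    (X 0 : MvPolynomial (Fin 2) (ZMod 2)) ^ n₁ * X 1 ^ n₂ ∉ I :=
  stmt_1_general n₁ n₂ I hI
end

section
/- Let n₁, n₂ ≥ 1 be integers with n₂ > n₁, such that C(n₂, i) is even for every 0 < i < n₂, and let r₁, r₂ be integers with n₁ ≤ 2^{r₁} − 1 < 2n₁ and n₂ ≤ 2^{r₂} − 1 < 2n₂. Let R = (ℤ/2)[y₁,y₂]/I where I is the ideal generated by y₁^{n₁+1} and y₂·(y₁+y₂)^{n₂}, and write ȳ₁, ȳ₂ for the images of y₁, y₂ in R. Then in the tensor product R ⊗_{ℤ/2} R one has (1 ⊗ ȳ₁ + ȳ₁ ⊗ 1)^{2^{r₁}−1} · (1 ⊗ ȳ₂ + ȳ₂ ⊗ 1)^{2^{r₂}−1} ≠ 0. -/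
/-!
Let `T = 𝔽₂[x₀, x₁, x₂, x₃] / (xᵢ^(eᵢ+1))` with `e = (n₁, n₂, n₁, n₂)`. There are two algebra maps
`R → T`, given by `ȳ₁ ↦ x₀, ȳ₂ ↦ x₁` and by `ȳ₁ ↦ x₂, ȳ₂ ↦ x₃`: they are well defined because
`y₂ (y₁ + y₂)^n₂ = y₂ y₁^n₂ + y₂^(n₂+1)` when the middle binomial coefficients of `n₂` are even, and
`y₁^n₂` dies since `n₂ > n₁`. The induced map `R ⊗ R → T` sends the product to
`(x₂ + x₀)^p₁ (x₃ + x₁)^p₂` with `pⱼ = 2^rⱼ - 1`. Multiplying by `x₀^(2n₁-p₁) x₁^(2n₂-p₂)` kills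
all but one term of each binomial expansion, leaving `C(p₁,n₁) C(p₂,n₂) x₀^n₁ x₁^n₂ x₂^n₁ x₃^n₂`;
the binomial coefficients of `2^r - 1` are all odd, and this top monomial is nonzero in `T`.
-/

open MvPolynomial TensorProduct

theorem Nat.odd_choose_two_pow_sub_one {r k : ℕ} (hk : k ≤ 2 ^ r - 1) :
    Odd ((2 ^ r - 1).choose k) := by
  induction k with
  | zero => simp
  | succ k ih =>
    have heven : Even ((2 ^ r - 1 + 1).choose (k + 1)) := by
      rw [Nat.sub_add_cancel Nat.one_le_two_pow, even_iff_two_dvd]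
      exact Nat.prime_two.dvd_choose_pow (by omega) (by omega)
    rw [Nat.choose_succ_succ', Nat.even_add] at heven
    rw [← Nat.not_even_iff_odd, ← heven, Nat.not_even_iff_odd]
    exact ih (by omega)

section PowerIdentities

variable {S : Type*} [CommSemiring S]

theorem add_pow_eq_of_choose_eq_zero (x y : S) {n : ℕ} (hn : n ≠ 0)
    (h : ∀ i, 0 < i → i < n → (n.choose i : S) = 0) : (x + y) ^ n = x ^ n + y ^ n := by
  rw [add_pow, Finset.sum_range_succ, Finset.sum_eq_single 0]
  · simp [add_comm]
  · intro i hi hi0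
    rw [h i (Nat.pos_of_ne_zero hi0) (Finset.mem_range.mp hi), mul_zero]
  · simp [hn]

theorem add_pow_mul_pow_eq_choose_mul {a b : S} {n p : ℕ}
    (ha : a ^ (n + 1) = 0) (hb : b ^ (n + 1) = 0) (hnp : n ≤ p) (hpn : p ≤ 2 * n) :
    (a + b) ^ p * b ^ (2 * n - p) = p.choose n * (a ^ n * b ^ n) := by
  have hterm : ∀ k, a ^ k * b ^ (p - k) * p.choose k * b ^ (2 * n - p) =
      p.choose k * (a ^ k * b ^ (p - k + (2 * n - p))) := fun k => by ring
  rw [add_pow, Finset.sum_mul, Finset.sum_eq_single n]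
  · rw [hterm, show p - n + (2 * n - p) = n by omega]
  · intro k _ hkn
    rw [hterm]
    rcases lt_or_gt_of_ne hkn with hlt | hgt
    · rw [pow_eq_zero_of_le (by omega : n + 1 ≤ p - k + (2 * n - p)) hb, mul_zero, mul_zero]
    · rw [pow_eq_zero_of_le hgt ha, zero_mul, mul_zero]
  · intro h; exact absurd (Finset.mem_range.mpr (by omega)) h

end PowerIdentities

theorem two_eq_zero_of_zmod_two_algebra (S : Type*) [Semiring S] [Algebra (ZMod 2) S] :
    (2 : S) = 0 := by
  rw [← map_ofNat (algebraMap (ZMod 2) S) 2, show (OfNat.ofNat 2 : ZMod 2) = 0 from rfl, map_zero]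

namespace MvPolynomial

variable {σ R : Type*}

section CommSemiring

variable [CommSemiring R]

noncomputable def truncationIdeal (e : σ → ℕ) : Ideal (MvPolynomial σ R) :=
  Ideal.span (Set.range fun i => X i ^ (e i + 1))

theorem monomial_one_notMem_truncationIdeal [Nontrivial R] {e : σ → ℕ} {d : σ →₀ ℕ}
    (hd : ∀ i, d i ≤ e i) : monomial d (1 : R) ∉ truncationIdeal e := by
  have hrange : (Set.range fun i => X i ^ (e i + 1) : Set (MvPolynomial σ R)) =
      (fun s => monomial s 1) '' Set.range fun i => Finsupp.single i (e i + 1) := by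
    rw [← Set.range_comp]; simp only [Function.comp_def, X_pow_eq_monomial]
  rw [truncationIdeal, hrange, mem_ideal_span_monomial_image]
  intro h
  obtain ⟨_, ⟨i, rfl⟩, hi⟩ := h d (by classical simp)
  have hle : e i + 1 ≤ d i := by simpa using hi i
  exact absurd (hd i) (by omega)

end CommSemiring

theorem mk_X_pow_eq_zero [CommRing R] (e : σ → ℕ) (i : σ) :
    Ideal.Quotient.mk (truncationIdeal e) (X i : MvPolynomial σ R) ^ (e i + 1) = 0 := by
  rw [← map_pow, Ideal.Quotient.eq_zero_iff_mem]
  exact Ideal.subset_span ⟨i, rfl⟩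

end MvPolynomial

@[simp]
theorem Ideal.Quotient.liftₐ_mk {R A B : Type*} [CommSemiring R] [CommRing A] [Algebra R A]
    [Semiring B] [Algebra R B] (I : Ideal A) (f : A →ₐ[R] B) (hI : ∀ a ∈ I, f a = 0) (a : A) :
    Ideal.Quotient.liftₐ I f hI (Ideal.Quotient.mk I a) = f a :=
  Ideal.Quotient.lift_mk _ _ _

theorem span_le_ker_aeval_of_pow_eq_zero {S : Type*} [CommRing S] [Algebra (ZMod 2) S]
    {n₁ n₂ : ℕ} (hlt : n₁ < n₂) (hbin : ∀ i, 0 < i → i < n₂ → Even (n₂.choose i)) {u v : S}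
    (hu : u ^ (n₁ + 1) = 0) (hv : v ^ (n₂ + 1) = 0) :
    Ideal.span {X 0 ^ (n₁ + 1), X 1 * (X 0 + X 1) ^ n₂} ≤
      RingHom.ker (aeval ![u, v] : MvPolynomial (Fin 2) (ZMod 2) →ₐ[ZMod 2] S) := by
  have hfrob : (u + v) ^ n₂ = u ^ n₂ + v ^ n₂ :=
    add_pow_eq_of_choose_eq_zero u v (by omega) fun i hi hin =>
      natCast_eq_zero_of_even_of_two_eq_zero (hbin i hi hin) (two_eq_zero_of_zmod_two_algebra S)
  rw [Ideal.span_le, Set.insert_subset_iff, Set.singleton_subset_iff]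
  refine ⟨by simpa using hu, ?_⟩
  simp only [SetLike.mem_coe, RingHom.mem_ker, map_mul, map_pow, map_add, aeval_X,
    Matrix.cons_val_zero, Matrix.cons_val_one, hfrob]
  rw [pow_eq_zero_of_le hlt hu, zero_add, ← pow_succ', hv]

theorem add_pow_mul_add_pow_ne_zero {S : Type*} [CommSemiring S] (h2 : (2 : S) = 0)
    {a b c d : S} {n m p q : ℕ} (ha : a ^ (n + 1) = 0) (hb : b ^ (n + 1) = 0)
    (hc : c ^ (m + 1) = 0) (hd : d ^ (m + 1) = 0) (hnp : n ≤ p) (hpn : p ≤ 2 * n)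
    (hmq : m ≤ q) (hqm : q ≤ 2 * m) (hp : Odd (p.choose n)) (hq : Odd (q.choose m))
    (htop : a ^ n * b ^ n * (c ^ m * d ^ m) ≠ 0) : (a + b) ^ p * (c + d) ^ q ≠ 0 := by
  intro h
  apply htop
  calc a ^ n * b ^ n * (c ^ m * d ^ m)
      = (a + b) ^ p * b ^ (2 * n - p) * ((c + d) ^ q * d ^ (2 * m - q)) := by
        rw [add_pow_mul_pow_eq_choose_mul ha hb hnp hpn,
          add_pow_mul_pow_eq_choose_mul hc hd hmq hqm, natCast_eq_one_of_odd_of_two_eq_zero hp h2,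
          natCast_eq_one_of_odd_of_two_eq_zero hq h2, one_mul, one_mul]
    _ = (a + b) ^ p * (c + d) ^ q * (b ^ (2 * n - p) * d ^ (2 * m - q)) := by ring
    _ = 0 := by rw [h, zero_mul]

theorem stmt_3_general (n₁ n₂ r₁ r₂ : ℕ) (hlt : n₁ < n₂)
    (hbin : ∀ i, 0 < i → i < n₂ → Even (n₂.choose i))
    (hr₁ : n₁ ≤ 2 ^ r₁ - 1) (hr₁' : 2 ^ r₁ - 1 < 2 * n₁)
    (hr₂ : n₂ ≤ 2 ^ r₂ - 1) (hr₂' : 2 ^ r₂ - 1 < 2 * n₂)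
    (I : Ideal (MvPolynomial (Fin 2) (ZMod 2)))
    (hI : I = Ideal.span {X 0 ^ (n₁ + 1), X 1 * (X 0 + X 1) ^ n₂}) :
    ((1 : MvPolynomial (Fin 2) (ZMod 2) ⧸ I) ⊗ₜ[ZMod 2] (Ideal.Quotient.mk I (X 0))
        + (Ideal.Quotient.mk I (X 0)) ⊗ₜ[ZMod 2] 1) ^ (2 ^ r₁ - 1)
      * ((1 : MvPolynomial (Fin 2) (ZMod 2) ⧸ I) ⊗ₜ[ZMod 2] (Ideal.Quotient.mk I (X 1))
        + (Ideal.Quotient.mk I (X 1)) ⊗ₜ[ZMod 2] 1) ^ (2 ^ r₂ - 1) ≠ 0 := by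
  set J : Ideal (MvPolynomial (Fin 4) (ZMod 2)) := truncationIdeal ![n₁, n₂, n₁, n₂]
  set x : Fin 4 → _ := fun i => Ideal.Quotient.mk J (X i)
  have hx (i : Fin 4) : x i ^ (![n₁, n₂, n₁, n₂] i + 1) = 0 := mk_X_pow_eq_zero _ i
  let f := Ideal.Quotient.liftₐ I (aeval ![x 0, x 1]) fun _ ha =>
    RingHom.mem_ker.mp (span_le_ker_aeval_of_pow_eq_zero hlt hbin (hx 0) (hx 1) (hI ▸ ha))
  let g := Ideal.Quotient.liftₐ I (aeval ![x 2, x 3]) fun _ ha =>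
    RingHom.mem_ker.mp (span_le_ker_aeval_of_pow_eq_zero hlt hbin (hx 2) (hx 3) (hI ▸ ha))
  have htop : x 2 ^ n₁ * x 0 ^ n₁ * (x 3 ^ n₂ * x 1 ^ n₂) ≠ 0 := by
    set d : Fin 4 →₀ ℕ := Finsupp.single 2 n₁ + Finsupp.single 0 n₁ + Finsupp.single 3 n₂ +
      Finsupp.single 1 n₂
    have hd : Ideal.Quotient.mk J (monomial d (1 : ZMod 2)) =
        x 2 ^ n₁ * x 0 ^ n₁ * (x 3 ^ n₂ * x 1 ^ n₂) := by
      simp only [d, x, monomial_add_single, ← X_pow_eq_monomial, map_mul, map_pow, mul_assoc]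
    rw [← hd, Ne, Ideal.Quotient.eq_zero_iff_mem]
    exact monomial_one_notMem_truncationIdeal fun i => by fin_cases i <;> simp [d]
  intro hE
  have himage := congrArg (Algebra.TensorProduct.lift f g fun _ _ => .all _ _) hE
  simp only [map_mul, map_pow, map_add, map_one, map_zero, one_mul, mul_one,
    Algebra.TensorProduct.lift_tmul, f, g, Ideal.Quotient.liftₐ_mk, aeval_X] at himage
  exact add_pow_mul_add_pow_ne_zero (n := n₁) (m := n₂) (two_eq_zero_of_zmod_two_algebra _)
    (hx 2) (hx 0) (hx 3) (hx 1) hr₁ (by omega) hr₂ (by omega) (Nat.odd_choose_two_pow_sub_one hr₁)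
    (Nat.odd_choose_two_pow_sub_one hr₂) htop himage

theorem stmt_3 (n₁ n₂ r₁ r₂ : ℕ) (h₁ : 1 ≤ n₁) (h₂ : 1 ≤ n₂) (hlt : n₁ < n₂)
    (hbin : ∀ i, 0 < i → i < n₂ → Even (n₂.choose i))
    (hr₁ : n₁ ≤ 2 ^ r₁ - 1) (hr₁' : 2 ^ r₁ - 1 < 2 * n₁)
    (hr₂ : n₂ ≤ 2 ^ r₂ - 1) (hr₂' : 2 ^ r₂ - 1 < 2 * n₂)
    (I : Ideal (MvPolynomial (Fin 2) (ZMod 2)))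
    (hI : I = Ideal.span {X 0 ^ (n₁ + 1), X 1 * (X 0 + X 1) ^ n₂}) :
    ((1 : MvPolynomial (Fin 2) (ZMod 2) ⧸ I) ⊗ₜ[ZMod 2] (Ideal.Quotient.mk I (X 0))
        + (Ideal.Quotient.mk I (X 0)) ⊗ₜ[ZMod 2] 1) ^ (2 ^ r₁ - 1)
      * ((1 : MvPolynomial (Fin 2) (ZMod 2) ⧸ I) ⊗ₜ[ZMod 2] (Ideal.Quotient.mk I (X 1))
        + (Ideal.Quotient.mk I (X 1)) ⊗ₜ[ZMod 2] 1) ^ (2 ^ r₂ - 1) ≠ 0 :=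
  stmt_3_general n₁ n₂ r₁ r₂ hlt hbin hr₁ hr₁' hr₂ hr₂' I hI
end

section
/- Let n₁, n₂ ≥ 1 be integers such that n₂ divides n₁ and C(n₂, i) is even for every 0 < i < n₂; set n = n₁ + n₂. Work in A = (ℤ/2)[y₁,y₂] and let I ⊆ A be the ideal generated by y₁^{n₁+1} and y₂·(y₁+y₂)^{n₂}. Then y₁^{n₁}·y₂^{n₂} − y₂^{n} ∈ I (i.e. y₁^{n₁} y₂^{n₂} = y₂^{n} in R = A/I), and y₂^{n} ∉ I (i.e. y₂^{n} ≠ 0 in R). -/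
/-!
In characteristic 2 with all middle binomial coefficients of `n₂` even, `(y₁ + y₂)^n₂ = y₁^n₂ + y₂^n₂`,
so `I = (y₁^(n₁+1), y₂ (y₁^n₂ + y₂^n₂))` and `y₂ y₂^n₂ ≡ y₂ y₁^n₂` modulo `I`. Since `y₁^n₂ - y₂^n₂`
divides `y₁^n₁ - y₂^n₁` when `n₂ ∣ n₁`, this gives `y₁^n₁ y₂^n₂ ≡ y₂^n`.

For `y₂^n ∉ I`, write `n₁ = k n₂` and consider the linear functional summing the coefficients of
the monomials `y₁^(n₂ i) y₂^(n₂ j + n₂)` with `i + j = k`. It kills every multiple of `y₁^(n₁+1)`,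
and on `f y₂ (y₁^n₂ + y₂^n₂)` the two summands contribute the same sum of coefficients of `f`,
hence cancel in characteristic 2; but it takes the value `1` on `y₂^n`.
-/

open MvPolynomial Finset

theorem add_pow_eq_of_dvd_choose {R : Type*} [CommSemiring R] (p : ℕ) [CharP R p] {n : ℕ}
    (hn : 0 < n) (hp : ∀ i, 0 < i → i < n → p ∣ n.choose i) (x y : R) :
    (x + y) ^ n = x ^ n + y ^ n := by
  rw [add_pow, sum_eq_add_of_mem n 0 (by simp) (by simp) hn.ne']
  · simp
  · rintro i hi ⟨hin, hi0⟩
    rw [mem_range] at hi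
    rw [(CharP.cast_eq_zero_iff R p _).2 (hp i (by omega) (by omega)), mul_zero]

theorem pow_mul_mul_pow_sub_pow_add_mem {R : Type*} [CommRing R] {I : Ideal R} {x y : R} {m : ℕ}
    (hm : 0 < m) (h : y * (x ^ m - y ^ m) ∈ I) (k : ℕ) :
    x ^ (m * k) * y ^ m - y ^ (m * k + m) ∈ I := by
  obtain ⟨b, rfl⟩ : ∃ b, m = b + 1 := ⟨m - 1, by omega⟩
  have hk : y * ((x ^ (b + 1)) ^ k - (y ^ (b + 1)) ^ k) ∈ I :=
    I.mem_of_dvd (mul_dvd_mul_left y (sub_dvd_pow_sub_pow _ _ k)) h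
  convert I.mul_mem_left (y ^ b) hk using 1
  ring

section Socle

variable {R : Type*} [CommRing R] (m : ℕ)

noncomputable def socleExponent (ij : ℕ × ℕ) : Fin 2 →₀ ℕ :=
  Finsupp.single 0 (m * ij.1) + Finsupp.single 1 (m * ij.2 + m)

noncomputable def socleFunctional (k : ℕ) : MvPolynomial (Fin 2) R →ₗ[R] R :=
  ∑ ij ∈ antidiagonal k, lcoeff R (socleExponent m ij)

theorem socleFunctional_apply (k : ℕ) (f : MvPolynomial (Fin 2) R) :
    socleFunctional m k f = ∑ ij ∈ antidiagonal k, coeff (socleExponent m ij) f := by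
  simp [socleFunctional]

@[simp] theorem socleExponent_zero (ij : ℕ × ℕ) : socleExponent m ij 0 = m * ij.1 := by
  simp [socleExponent]

@[simp] theorem socleExponent_one (ij : ℕ × ℕ) : socleExponent m ij 1 = m * ij.2 + m := by
  simp [socleExponent]

theorem socleFunctional_mul_X_zero_pow (k : ℕ) (f : MvPolynomial (Fin 2) R) :
    socleFunctional m k (f * X 0 ^ (m * k + 1)) = 0 := by
  rw [socleFunctional_apply]
  refine sum_eq_zero fun ij hij => ?_
  rw [X_pow_eq_monomial, coeff_mul_monomial', if_neg]
  intro hle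
  have h0 := hle 0
  have : m * ij.1 ≤ m * k :=
    Nat.mul_le_mul_left m (by rw [HasAntidiagonal.mem_antidiagonal] at hij; omega)
  simp only [Finsupp.single_eq_same, socleExponent_zero] at h0
  omega

theorem socleFunctional_X_one_pow (hm : 0 < m) (k : ℕ) :
    socleFunctional m k (X 1 ^ (m * k + m) : MvPolynomial (Fin 2) R) = 1 := by
  rw [socleFunctional_apply, sum_eq_single_of_mem (0, k) (by simp)]
  · rw [X_pow_eq_monomial, coeff_monomial, if_pos]
    ext a; fin_cases a <;> simp
  · rintro ⟨i, j⟩ hij hne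
    have hi : i ≠ 0 := by rintro rfl; simp_all
    rw [X_pow_eq_monomial, coeff_monomial, if_neg]
    intro h
    have h0 := congrArg (· 0) h
    simp only [Finsupp.single_eq_of_ne (show (0 : Fin 2) ≠ 1 by decide), socleExponent_zero] at h0
    exact hi (by simpa [hm.ne'] using h0.symm)

theorem coeff_socleExponent_mul_X_zero_pow_mul_X_one (hm : 0 < m) (f : MvPolynomial (Fin 2) R)
    (ij : ℕ × ℕ) :
    coeff (socleExponent m ij) (f * (X 0 ^ m * X 1)) =
      if ij.1 = 0 then 0 else
        coeff (Finsupp.single 0 (m * (ij.1 - 1)) + Finsupp.single 1 (m * ij.2 + (m - 1))) f := by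
  have hmon : (X 0 ^ m * X 1 : MvPolynomial (Fin 2) R) =
      monomial (Finsupp.single 0 m + Finsupp.single 1 1) 1 := by
    rw [X_pow_eq_monomial, X, monomial_mul, one_mul]
  rw [hmon, coeff_mul_monomial', mul_one]
  obtain ⟨i, j⟩ := ij
  rcases i with _ | i
  · rw [if_neg, if_pos rfl]
    exact fun hle => hm.ne' (by simpa using hle 0)
  · rw [if_pos, if_neg (Nat.succ_ne_zero i)]
    · congr 1
      ext a; fin_cases a <;> simp [Nat.mul_succ]; omega
    · intro a; fin_cases a <;> simp [Nat.mul_succ]; omega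

theorem coeff_socleExponent_mul_X_one_pow (hm : 0 < m) (f : MvPolynomial (Fin 2) R)
    (ij : ℕ × ℕ) :
    coeff (socleExponent m ij) (f * X 1 ^ (m + 1)) =
      if ij.2 = 0 then 0 else
        coeff (Finsupp.single 0 (m * ij.1) + Finsupp.single 1 (m * (ij.2 - 1) + (m - 1))) f := by
  rw [X_pow_eq_monomial, coeff_mul_monomial', mul_one]
  obtain ⟨i, j⟩ := ij
  rcases j with _ | j
  · rw [if_neg, if_pos rfl]
    exact fun hle => by simpa using hle 1
  · rw [if_pos, if_neg (Nat.succ_ne_zero j)]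
    · congr 1
      ext a; fin_cases a <;> simp [Nat.mul_succ]; omega
    · intro a; fin_cases a <;> simp [Nat.mul_succ]; omega

theorem socleFunctional_mul_X_one_mul [CharP R 2] (hm : 0 < m) (k : ℕ)
    (f : MvPolynomial (Fin 2) R) :
    socleFunctional m k (f * (X 1 * (X 0 ^ m + X 1 ^ m))) = 0 := by
  have hsplit : f * (X 1 * (X 0 ^ m + X 1 ^ m)) = f * (X 0 ^ m * X 1) + f * X 1 ^ (m + 1) := by
    ring
  simp only [hsplit, map_add, socleFunctional_apply,
    coeff_socleExponent_mul_X_zero_pow_mul_X_one m hm, coeff_socleExponent_mul_X_one_pow m hm]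
  rcases k with _ | k
  · simp
  · rw [Nat.sum_antidiagonal_succ, Nat.sum_antidiagonal_succ']
    simp only [Nat.succ_ne_zero, if_false, if_true, add_tsub_cancel_right, zero_add]
    exact CharTwo.add_self_eq_zero _

end Socle

theorem stmt_4_general (n₁ n₂ : ℕ) (h₂ : 1 ≤ n₂) (hdvd : n₂ ∣ n₁)
    (hbin : ∀ i, 0 < i → i < n₂ → Even (n₂.choose i))
    (I : Ideal (MvPolynomial (Fin 2) (ZMod 2)))
    (hI : I = Ideal.span {X 0 ^ (n₁ + 1), X 1 * (X 0 + X 1) ^ n₂}) :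
    (X 0 : MvPolynomial (Fin 2) (ZMod 2)) ^ n₁ * X 1 ^ n₂ - X 1 ^ (n₁ + n₂) ∈ I ∧
    (X 1 : MvPolynomial (Fin 2) (ZMod 2)) ^ (n₁ + n₂) ∉ I := by
  obtain ⟨k, rfl⟩ := hdvd
  have hfrob : (X 0 + X 1 : MvPolynomial (Fin 2) (ZMod 2)) ^ n₂ = X 0 ^ n₂ + X 1 ^ n₂ :=
    add_pow_eq_of_dvd_choose 2 h₂ (fun i hi0 hin => (hbin i hi0 hin).two_dvd) _ _
  rw [hfrob] at hI
  subst hI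
  constructor
  · refine pow_mul_mul_pow_sub_pow_add_mem h₂ ?_ k
    rw [CharTwo.sub_eq_add]
    exact Ideal.subset_span (by simp)
  · intro hmem
    obtain ⟨u, v, huv⟩ := Ideal.mem_span_pair.1 hmem
    have h := congrArg (socleFunctional n₂ k) huv
    rw [map_add, socleFunctional_mul_X_zero_pow, socleFunctional_mul_X_one_mul n₂ h₂,
      socleFunctional_X_one_pow n₂ h₂, add_zero] at h
    exact zero_ne_one h

theorem stmt_4 (n₁ n₂ : ℕ) (h₁ : 1 ≤ n₁) (h₂ : 1 ≤ n₂) (hdvd : n₂ ∣ n₁)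
    (hbin : ∀ i, 0 < i → i < n₂ → Even (n₂.choose i))
    (I : Ideal (MvPolynomial (Fin 2) (ZMod 2)))
    (hI : I = Ideal.span {X 0 ^ (n₁ + 1), X 1 * (X 0 + X 1) ^ n₂}) :
    (X 0 : MvPolynomial (Fin 2) (ZMod 2)) ^ n₁ * X 1 ^ n₂ - X 1 ^ (n₁ + n₂) ∈ I ∧
    (X 1 : MvPolynomial (Fin 2) (ZMod 2)) ^ (n₁ + n₂) ∉ I :=
  stmt_4_general n₁ n₂ h₂ hdvd hbin I hI
end

section
/- Let n₁, n₂ ≥ 1 be integers, n = n₁ + n₂, and let R = (ℤ/2)[y₁,y₂]/I where I is the ideal generated by y₁^{n₁+1} and y₂·(y₁+y₂)^{n₂}. Suppose y₂^{n} ∉ I (i.e. ȳ₂^{n} ≠ 0 in R), and let r be an integer with n ≤ 2^{r} − 1 < 2n. Then in the tensor product R ⊗_{ℤ/2} R one has (1 ⊗ ȳ₂ + ȳ₂ ⊗ 1)^{2^{r}−1} ≠ 0, where ȳ₂ is the image of y₂ in R. -/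
open MvPolynomial TensorProduct

/-! Since `I` is generated by homogeneous polynomials, the projection `π_d` onto degree `d`
descends to `R`. Write `m = 2^r - 1` and expand `(1 ⊗ ȳ₂ + ȳ₂ ⊗ 1)^m = ∑ C(m,k) ȳ₂^(m-k) ⊗ ȳ₂^k`.
Applying `π_(m-n) ⊗ id` kills every term except `C(m,n) ȳ₂^(m-n) ⊗ ȳ₂^n`. Every `C(2^r - 1, k)`
is odd (Lucas), and `ȳ₂^(m-n) ≠ 0` because `m - n ≤ n`, so this is a tensor of two nonzero
vectors over a field, hence nonzero. -/

theorem ZMod.choose_two_pow_sub_one_eq_one (r : ℕ) {k : ℕ} (hk : k ≤ 2 ^ r - 1) :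
    ((2 ^ r - 1).choose k : ZMod 2) = 1 := by
  induction r generalizing k with
  | zero => simp [Nat.le_zero.mp hk]
  | succ r ih =>
    -- Lucas: the last binary digit of `2^(r+1) - 1` is `1`, the others are those of `2^r - 1`.
    have hpos : 1 ≤ 2 ^ r := Nat.one_le_two_pow
    have hmod : (2 ^ (r + 1) - 1) % 2 = 1 := by omega
    have hdiv : (2 ^ (r + 1) - 1) / 2 = 2 ^ r - 1 := by omega
    have lucas := (ZMod.intCast_eq_intCast_iff _ _ _).mpr
      (Choose.choose_modEq_choose_mod_mul_choose_div (n := 2 ^ (r + 1) - 1) (k := k) (p := 2))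
    push_cast at lucas
    rw [lucas, hmod, hdiv, ih (by omega)]
    rcases Nat.mod_two_eq_zero_or_one k with h | h <;> simp [h]

theorem TensorProduct.tmul_ne_zero {R M N : Type*} [CommRing R] [IsDomain R]
    [AddCommGroup M] [Module R M] [Module.Projective R M]
    [AddCommGroup N] [Module R N] [Module.Projective R N]
    {x : M} {y : N} (hx : x ≠ 0) (hy : y ≠ 0) : x ⊗ₜ[R] y ≠ 0 := by
  obtain ⟨f, hf⟩ := Module.Projective.exists_dual_ne_zero R hx
  obtain ⟨g, hg⟩ := Module.Projective.exists_dual_ne_zero R hy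
  intro h
  have := congrArg (dualDistrib R M N (f ⊗ₜ g)) h
  rw [dualDistrib_apply, map_zero] at this
  exact mul_ne_zero hf hg this

theorem Algebra.TensorProduct.one_tmul_add_tmul_one_pow {R S : Type*} [CommSemiring R]
    [CommSemiring S] [Algebra R S] (b : S) (m : ℕ) :
    ((1 : S) ⊗ₜ[R] b + b ⊗ₜ[R] 1) ^ m =
      ∑ k ∈ Finset.range (m + 1), m.choose k • ((b ^ (m - k)) ⊗ₜ[R] (b ^ k)) := by
  rw [add_pow]
  refine Finset.sum_congr rfl fun k _ => ?_
  rw [tmul_pow, tmul_pow, one_pow, one_pow, tmul_mul_tmul, one_mul, mul_one, mul_comm,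
    ← nsmul_eq_mul]

attribute [local instance] MvPolynomial.gradedAlgebra

namespace MvPolynomial

variable {σ R : Type*} [CommRing R] {I : Ideal (MvPolynomial σ R)}

noncomputable def quotientHomogeneousComponent
    (hI : I.IsHomogeneous (homogeneousSubmodule σ R)) (d : ℕ) :
    Module.End R (MvPolynomial σ R ⧸ I) :=
  (Submodule.Quotient.restrictScalarsEquiv R I).conj <|
    Submodule.mapQ _ _ (homogeneousComponent d) fun _ hp =>
      homogeneousComponent_mem_of_mem hI hp d

theorem quotientHomogeneousComponent_mk (hI : I.IsHomogeneous (homogeneousSubmodule σ R))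
    (d : ℕ) (p : MvPolynomial σ R) :
    quotientHomogeneousComponent hI d (Ideal.Quotient.mk I p) =
      Ideal.Quotient.mk I (homogeneousComponent d p) :=
  rfl

theorem quotientHomogeneousComponent_mk_of_isHomogeneous
    (hI : I.IsHomogeneous (homogeneousSubmodule σ R)) (d : ℕ) {j : ℕ} {p : MvPolynomial σ R}
    (hp : p.IsHomogeneous j) :
    quotientHomogeneousComponent hI d (Ideal.Quotient.mk I p) =
      if d = j then Ideal.Quotient.mk I p else 0 := by
  rw [quotientHomogeneousComponent_mk, homogeneousComponent_of_mem hp]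
  split_ifs <;> simp

theorem rTensor_quotientHomogeneousComponent_one_tmul_add_tmul_one_pow
    (hI : I.IsHomogeneous (homogeneousSubmodule σ R)) {p : MvPolynomial σ R}
    (hp : p.IsHomogeneous 1) {d m : ℕ} (hd : d ≤ m) :
    (quotientHomogeneousComponent hI d).rTensor _
        ((1 ⊗ₜ[R] Ideal.Quotient.mk I p + Ideal.Quotient.mk I p ⊗ₜ[R] 1) ^ m) =
      m.choose d • ((Ideal.Quotient.mk I p ^ d) ⊗ₜ[R] (Ideal.Quotient.mk I p ^ (m - d))) := by
  have hpow (j : ℕ) : quotientHomogeneousComponent hI d (Ideal.Quotient.mk I p ^ j) =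
      if d = j then Ideal.Quotient.mk I p ^ j else 0 := by
    rw [← map_pow, quotientHomogeneousComponent_mk_of_isHomogeneous hI d
      (by simpa using hp.pow j)]
  rw [Algebra.TensorProduct.one_tmul_add_tmul_one_pow, map_sum,
    Finset.sum_eq_single_of_mem (m - d) (by simp)]
  · rw [map_nsmul, LinearMap.rTensor_tmul, Nat.sub_sub_self hd, hpow, if_pos rfl,
      Nat.choose_symm hd]
  · intro k hk hkd
    rw [Finset.mem_range] at hk
    rw [map_nsmul, LinearMap.rTensor_tmul, hpow, if_neg (by omega), zero_tmul, smul_zero]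

end MvPolynomial

theorem stmt_5_general (n₁ n₂ r : ℕ)
    (I : Ideal (MvPolynomial (Fin 2) (ZMod 2)))
    (hI : I = Ideal.span {X 0 ^ (n₁ + 1), X 1 * (X 0 + X 1) ^ n₂})
    (hy : (X 1 : MvPolynomial (Fin 2) (ZMod 2)) ^ (n₁ + n₂) ∉ I)
    (hr : n₁ + n₂ ≤ 2 ^ r - 1) (hr' : 2 ^ r - 1 < 2 * (n₁ + n₂)) :
    ((1 : MvPolynomial (Fin 2) (ZMod 2) ⧸ I) ⊗ₜ[ZMod 2] (Ideal.Quotient.mk I (X 1))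
        + (Ideal.Quotient.mk I (X 1)) ⊗ₜ[ZMod 2] 1) ^ (2 ^ r - 1) ≠ 0 := by
  set n := n₁ + n₂
  set m := 2 ^ r - 1
  set b := Ideal.Quotient.mk I (X 1 : MvPolynomial (Fin 2) (ZMod 2))
  have hhom : I.IsHomogeneous (homogeneousSubmodule (Fin 2) (ZMod 2)) := by
    rw [hI]
    refine Ideal.homogeneous_span _ _ ?_
    rintro x (rfl | rfl)
    · exact ⟨n₁ + 1, by simpa using (isHomogeneous_X (ZMod 2) (0 : Fin 2)).pow (n₁ + 1)⟩
    · exact ⟨1 + n₂, (isHomogeneous_X _ _).mul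
        (by simpa using ((isHomogeneous_X _ (0 : Fin 2)).add (isHomogeneous_X _ 1)).pow n₂)⟩
  have hbn : b ^ n ≠ 0 := by
    rwa [← map_pow, Ne, Ideal.Quotient.eq_zero_iff_mem]
  have hbmn : b ^ (m - n) ≠ 0 := fun h => hbn (pow_eq_zero_of_le (by omega) h)
  intro h
  have key := rTensor_quotientHomogeneousComponent_one_tmul_add_tmul_one_pow hhom
    (isHomogeneous_X (ZMod 2) 1) (Nat.sub_le m n)
  rw [h, map_zero, Nat.sub_sub_self hr, ← Nat.cast_smul_eq_nsmul (ZMod 2),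
    Nat.choose_symm (by omega), ZMod.choose_two_pow_sub_one_eq_one r hr, one_smul] at key
  exact TensorProduct.tmul_ne_zero hbmn hbn key.symm

theorem stmt_5 (n₁ n₂ r : ℕ) (h₁ : 1 ≤ n₁) (h₂ : 1 ≤ n₂)
    (I : Ideal (MvPolynomial (Fin 2) (ZMod 2)))
    (hI : I = Ideal.span {X 0 ^ (n₁ + 1), X 1 * (X 0 + X 1) ^ n₂})
    (hy : (X 1 : MvPolynomial (Fin 2) (ZMod 2)) ^ (n₁ + n₂) ∉ I)
    (hr : n₁ + n₂ ≤ 2 ^ r - 1) (hr' : 2 ^ r - 1 < 2 * (n₁ + n₂)) :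
    ((1 : MvPolynomial (Fin 2) (ZMod 2) ⧸ I) ⊗ₜ[ZMod 2] (Ideal.Quotient.mk I (X 1))
        + (Ideal.Quotient.mk I (X 1)) ⊗ₜ[ZMod 2] 1) ^ (2 ^ r - 1) ≠ 0 :=
  stmt_5_general n₁ n₂ r I hI hy hr hr'
end

section
/- Let n₁, n₂ ≥ 1 be integers with n₂ > n₁ + 1 and such that C(n₂ − 1, i) is even for every 0 < i < n₂ − 1; set n = n₁ + n₂. Work in A = (ℤ/2)[y₁,y₂] and let I ⊆ A be the ideal generated by y₁^{n₁+1} and y₂·(y₁+y₂)^{n₂}. Then y₁^{n₁}·y₂^{n₂} − y₂^{n} ∈ I (i.e. y₁^{n₁} y₂^{n₂} = y₂^{n} in R = A/I), and y₂^{n} ∉ I (i.e. y₂^{n} ≠ 0 in R). -/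
/-!
As the binomial coefficients `C(n₂ - 1, i)` are even, `(y₁ + y₂)^(n₂ - 1)` is
`y₁^(n₂ - 1) + y₂^(n₂ - 1)`, and as `y₁^(n₂ - 1) ∈ I` this turns the second generator into
`y₂^n₂ (y₁ + y₂)`. The first claim then follows from `y₁ - y₂ ∣ y₁^n₁ - y₂^n₁`. For the second,
a relation `y₂^n = u y₁^(n₁+1) + v y₂^n₂ (y₁ - y₂)` shows, since `y₁` is prime, that
`y₁^(n₁+1) ∣ y₂^n₁ - v (y₁ - y₂)`; substituting `y₁ := y₂` gives `y₂^(n₁+1) ∣ y₂^n₁`, absurd.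
-/

open MvPolynomial

theorem add_pow_eq_pow_add_pow_of_even_choose {R : Type*} [CommSemiring R] [CharP R 2] {m : ℕ}
    (hm : m ≠ 0) (heven : ∀ i, 0 < i → i < m → Even (m.choose i)) (a b : R) :
    (a + b) ^ m = a ^ m + b ^ m := by
  rw [add_pow, Finset.sum_eq_add m 0 hm]
  · simp
  · rintro i hi ⟨him, hi0⟩
    have hlt : i < m := lt_of_le_of_ne (Nat.lt_succ_iff.1 (Finset.mem_range.1 hi)) him
    rw [(CharP.cast_eq_zero_iff R 2 _).2 (heven i (Nat.pos_of_ne_zero hi0) hlt).two_dvd, mul_zero]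
  · simp
  · simp

theorem Ideal.span_pair_mul_add_pow_succ_eq_of_add_pow {R : Type*} [CommRing R] {x y : R}
    {k m : ℕ} (hkm : k ≤ m) (hfrob : (x + y) ^ m = x ^ m + y ^ m) :
    Ideal.span {x ^ k, y * (x + y) ^ (m + 1)} = Ideal.span {x ^ k, y ^ (m + 1) * (x + y)} := by
  obtain ⟨j, rfl⟩ := Nat.exists_eq_add_of_le hkm
  have hgen : y * (x + y) ^ (k + j + 1) =
      y ^ (k + j + 1) * (x + y) + x ^ j * y * (x + y) * x ^ k := by
    rw [pow_succ, hfrob]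
    ring
  rw [hgen, Ideal.span_pair_add_mul_left]

theorem MvPolynomial.X_pow_add_notMem_span_pair {R σ : Type*} [CommRing R] [IsDomain R] {i j : σ}
    (hij : i ≠ j) (a b : ℕ) :
    (X j : MvPolynomial σ R) ^ (a + b) ∉ Ideal.span {X i ^ (a + 1), X j ^ b * (X i - X j)} := by
  rw [Ideal.mem_span_pair]
  rintro ⟨u, v, huv⟩
  have hdvd : (X i : MvPolynomial σ R) ^ (a + 1) ∣ X j ^ b * (X j ^ a - v * (X i - X j)) :=
    ⟨u, by linear_combination -huv⟩
  have hndvd : ¬ (X i : MvPolynomial σ R) ∣ X j ^ b := fun h =>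
    hij (X_dvd_X.1 (X_prime.dvd_of_dvd_pow h))
  have hdiag := map_dvd (aeval fun _ => (X j : MvPolynomial σ R))
    (X_prime.pow_dvd_of_dvd_mul_left _ hndvd hdvd)
  simp only [map_pow, map_sub, map_mul, aeval_X, sub_self, mul_zero, sub_zero] at hdiag
  have := (pow_dvd_pow_iff (X_ne_zero j) X_prime.not_isUnit).1 hdiag
  omega

theorem stmt_6_general (n₁ n₂ : ℕ) (hlt : n₁ + 1 < n₂)
    (hbin : ∀ i, 0 < i → i < n₂ - 1 → Even ((n₂ - 1).choose i))
    (I : Ideal (MvPolynomial (Fin 2) (ZMod 2)))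
    (hI : I = Ideal.span {X 0 ^ (n₁ + 1), X 1 * (X 0 + X 1) ^ n₂}) :
    (X 0 : MvPolynomial (Fin 2) (ZMod 2)) ^ n₁ * X 1 ^ n₂ - X 1 ^ (n₁ + n₂) ∈ I ∧
    (X 1 : MvPolynomial (Fin 2) (ZMod 2)) ^ (n₁ + n₂) ∉ I := by
  obtain ⟨m, rfl⟩ : ∃ m, n₂ = m + 1 := ⟨n₂ - 1, by omega⟩
  rw [Nat.add_sub_cancel] at hbin
  have hfrob := add_pow_eq_pow_add_pow_of_even_choose (R := MvPolynomial (Fin 2) (ZMod 2))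
    (by omega) hbin (X 0) (X 1)
  rw [Ideal.span_pair_mul_add_pow_succ_eq_of_add_pow (by omega) hfrob, ← CharTwo.sub_eq_add] at hI
  subst hI
  refine ⟨Ideal.mem_of_dvd _ ?_ (Ideal.subset_span (Set.mem_insert_of_mem _ rfl)),
    X_pow_add_notMem_span_pair (by decide) n₁ (m + 1)⟩
  rw [show (X 0 : MvPolynomial (Fin 2) (ZMod 2)) ^ n₁ * X 1 ^ (m + 1) - X 1 ^ (n₁ + (m + 1)) =
      X 1 ^ (m + 1) * (X 0 ^ n₁ - X 1 ^ n₁) by ring]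
  exact mul_dvd_mul_left _ (sub_dvd_pow_sub_pow _ _ _)

theorem stmt_6 (n₁ n₂ : ℕ) (h₁ : 1 ≤ n₁) (h₂ : 1 ≤ n₂) (hlt : n₁ + 1 < n₂)
    (hbin : ∀ i, 0 < i → i < n₂ - 1 → Even ((n₂ - 1).choose i))
    (I : Ideal (MvPolynomial (Fin 2) (ZMod 2)))
    (hI : I = Ideal.span {X 0 ^ (n₁ + 1), X 1 * (X 0 + X 1) ^ n₂}) :
    (X 0 : MvPolynomial (Fin 2) (ZMod 2)) ^ n₁ * X 1 ^ n₂ - X 1 ^ (n₁ + n₂) ∈ I ∧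
    (X 1 : MvPolynomial (Fin 2) (ZMod 2)) ^ (n₁ + n₂) ∉ I :=
  stmt_6_general n₁ n₂ hlt hbin I hI
end

section
/- Let n₁, n₂ ≥ 1 be integers with n₁ even, n₂ > n₁ + 2, and such that C(n₂ − 2, i) is even for every 0 < i < n₂ − 2; set n = n₁ + n₂. Work in A = (ℤ/2)[y₁,y₂] and let I ⊆ A be the ideal generated by y₁^{n₁+1} and y₂·(y₁+y₂)^{n₂}. Then y₁^{n₁}·y₂^{n₂} − y₂^{n} ∈ I (i.e. y₁^{n₁} y₂^{n₂} = y₂^{n} in R = A/I), and y₂^{n} ∉ I (i.e. y₂^{n} ≠ 0 in R). -/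
/-!
Modulo `I`, the parity of the binomial coefficients gives
`(y₁ + y₂) ^ (n₂ - 2) = y₁ ^ (n₂ - 2) + y₂ ^ (n₂ - 2)`, and `y₁ ^ (n₂ - 2) = 0` because
`n₂ - 2 > n₁`.
So `y₂ (y₁ + y₂) ^ n₂ = 0` becomes `y₂ ^ (n₂ + 2) = y₁ ^ 2 y₂ ^ n₂`, and iterating this `n₁ / 2`
times gives `y₂ ^ n = y₁ ^ n₁ y₂ ^ n₂`.

For `y₂ ^ n ∉ I`, apply the substitution `y₂ ↦ y₁ + y₂` (an involution in characteristic 2): it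
turns `I` into `(y₁ ^ (n₁ + 1), (y₁ + y₂) y₂ ^ n₂)` and `y₂ ^ n` into `(y₁ + y₂) ^ n`. The linear
form summing the coefficients of `y₁ ^ a y₂ ^ (n - a)` over `a ≤ n₁` kills the new ideal: on
`v (y₁ + y₂) y₂ ^ n₂` the two summands contribute the same sum of coefficients of `v`.
Its value on `(y₁ + y₂) ^ n = (y₁ + y₂) ^ (n₁ + 2) (y₁ ^ (n₂ - 2) + y₂ ^ (n₂ - 2))` is
`∑ a ≤ n₁, C(n₁ + 2, a) = 2 ^ (n₁ + 2) - (n₁ + 2) - 1`, which is odd.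
-/

open MvPolynomial Finset

theorem add_pow_eq_add_pow_of_even_choose {R : Type*} [CommSemiring R] (h2 : (2 : R) = 0)
    {m : ℕ} (hm : 0 < m)
    (hchoose : ∀ i, 0 < i → i < m → Even (m.choose i)) (x y : R) :
    (x + y) ^ m = x ^ m + y ^ m := by
  obtain ⟨m, rfl⟩ := Nat.exists_eq_add_one_of_ne_zero hm.ne'
  have hmid : ∑ i ∈ range m,
      x ^ (i + 1) * y ^ (m + 1 - (i + 1)) * ((m + 1).choose (i + 1) : R) = 0 := by
    refine sum_eq_zero fun i hi => ?_
    obtain ⟨r, hr⟩ := hchoose (i + 1) i.succ_pos (by simpa using hi)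
    rw [hr, Nat.cast_add, ← two_mul, h2, zero_mul, mul_zero]
  rw [add_pow, sum_range_succ, sum_range_succ', hmid]
  simp [add_comm]

theorem pow_add_four_eq_of_mul_add_pow_eq_zero {R : Type*} [CommRing R] (h2 : (2 : R) = 0)
    {x y : R} {m : ℕ} (hfrob : (x + y) ^ m = x ^ m + y ^ m) (hx : x ^ m = 0)
    (hy : y * (x + y) ^ (m + 2) = 0) :
    y ^ (m + 2 + 2) = x ^ 2 * y ^ (m + 2) := by
  linear_combination y * hy - y ^ 2 * (x + y) ^ 2 * hfrob - y ^ 2 * (x + y) ^ 2 * hx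
    - (x ^ 2 * y ^ (m + 2) + x * y ^ (m + 3)) * h2

theorem pow_add_two_mul_eq_of_pow_add_two_eq {M : Type*} [CommMonoid M] {x y : M} {k : ℕ}
    (h : y ^ (k + 2) = x ^ 2 * y ^ k) (j : ℕ) : y ^ (k + 2 * j) = x ^ (2 * j) * y ^ k := by
  induction j with
  | zero => simp
  | succ j ih =>
    calc y ^ (k + 2 * (j + 1)) = y ^ (2 * j) * y ^ (k + 2) := by
          rw [← pow_add]; congr 1; ring
      _ = x ^ 2 * y ^ (k + 2 * j) := by
          rw [h, pow_add, mul_left_comm, mul_comm (y ^ k)]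
      _ = x ^ (2 * (j + 1)) * y ^ k := by
          rw [ih, ← mul_assoc, ← pow_add]; congr 2; ring

theorem pow_mul_pow_eq_pow_add {R : Type*} [CommRing R] (h2 : (2 : R) = 0) {x y : R} {k m : ℕ}
    (hk : Even k) (hkm : k + 1 ≤ m) (hchoose : ∀ i, 0 < i → i < m → Even (m.choose i))
    (hx : x ^ (k + 1) = 0) (hy : y * (x + y) ^ (m + 2) = 0) :
    x ^ k * y ^ (m + 2) = y ^ (k + (m + 2)) := by
  have hstep := pow_add_four_eq_of_mul_add_pow_eq_zero h2
    (add_pow_eq_add_pow_of_even_choose h2 (by omega) hchoose x y) (pow_eq_zero_of_le hkm hx) hy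
  obtain ⟨j, rfl⟩ := hk.two_dvd
  rw [add_comm (2 * j), pow_add_two_mul_eq_of_pow_add_two_eq hstep]

section LowCoeffSum

variable {R : Type*} [CommSemiring R]

theorem coeff_mul_X_pow_of_lt {σ : Type*} (p : MvPolynomial σ R) {i : σ} {j : ℕ}
    {s : σ →₀ ℕ} (h : s i < j) : coeff s (p * X i ^ j) = 0 := by
  rw [X_pow_eq_monomial, coeff_mul_monomial', if_neg]
  intro hle
  simpa using (hle i).trans_lt h

theorem coeff_add_single_mul_X_pow {σ : Type*} (p : MvPolynomial σ R) (s : σ →₀ ℕ) (i : σ)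
    (j : ℕ) : coeff (s + Finsupp.single i j) (p * X i ^ j) = coeff s p := by
  rw [X_pow_eq_monomial, coeff_mul_monomial, mul_one]

noncomputable def lowCoeffSum (k N : ℕ) : MvPolynomial (Fin 2) R →ₗ[R] R :=
  ∑ a ∈ range (k + 1), lcoeff R (Finsupp.single 0 a + Finsupp.single 1 (N - a))

theorem lowCoeffSum_apply (k N : ℕ) (f : MvPolynomial (Fin 2) R) :
    lowCoeffSum k N f =
      ∑ a ∈ range (k + 1), coeff (Finsupp.single 0 a + Finsupp.single 1 (N - a)) f := by
  simp [lowCoeffSum]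

theorem lowCoeffSum_mul_X_zero_pow_of_lt {k j : ℕ} (N : ℕ) (hkj : k < j)
    (f : MvPolynomial (Fin 2) R) : lowCoeffSum k N (f * X 0 ^ j) = 0 := by
  rw [lowCoeffSum_apply]
  refine sum_eq_zero fun a ha => coeff_mul_X_pow_of_lt f ?_
  simp only [Finsupp.add_apply, Finsupp.single_eq_same, Finsupp.single_apply,
    one_ne_zero, if_false, add_zero]
  have := mem_range.mp ha
  omega

theorem lowCoeffSum_mul_X_one_pow {k j : ℕ} (m : ℕ) (hkj : k ≤ j)
    (f : MvPolynomial (Fin 2) R) :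
    lowCoeffSum k (j + m) (f * X 1 ^ m) = lowCoeffSum k j f := by
  simp only [lowCoeffSum_apply]
  refine sum_congr rfl fun a ha => ?_
  have : j + m - a = j - a + m := by have := mem_range.mp ha; omega
  rw [this, Finsupp.single_add, ← add_assoc, coeff_add_single_mul_X_pow]

theorem lowCoeffSum_mul_X_zero_mul_X_one_pow (k m : ℕ) (f : MvPolynomial (Fin 2) R) :
    lowCoeffSum (k + 1) (k + 1 + m) (f * X 0 * X 1 ^ m) = lowCoeffSum k k f := by
  have hsplit : f * X 0 * X 1 ^ m = f * X 1 ^ m * X 0 ^ 1 := by ring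
  rw [hsplit, lowCoeffSum_apply, sum_range_succ', coeff_mul_X_pow_of_lt _ (by simp), add_zero,
    ← lowCoeffSum_mul_X_one_pow m le_rfl, lowCoeffSum_apply]
  refine sum_congr rfl fun a ha => ?_
  rw [show k + 1 + m - (a + 1) = k + m - a by omega, Finsupp.single_add, add_right_comm,
    coeff_add_single_mul_X_pow]

theorem lowCoeffSum_mul_X_one_pow_succ (k m : ℕ) (f : MvPolynomial (Fin 2) R) :
    lowCoeffSum (k + 1) (k + 1 + m) (f * X 1 ^ (m + 1)) = lowCoeffSum k k f := by
  rw [lowCoeffSum_apply, sum_range_succ, coeff_mul_X_pow_of_lt _ (by simp), add_zero,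
    ← lowCoeffSum_mul_X_one_pow (m + 1) le_rfl, lowCoeffSum_apply,
    show k + 1 + m = k + (m + 1) by omega]

theorem lowCoeffSum_eq_zero_of_mem_span [CharP R 2] {k m : ℕ} {f : MvPolynomial (Fin 2) R}
    (hf : f ∈ Ideal.span {X 0 ^ (k + 2), (X 0 + X 1) * X 1 ^ m}) :
    lowCoeffSum (k + 1) (k + 1 + m) f = 0 := by
  obtain ⟨u, v, rfl⟩ := Ideal.mem_span_pair.mp hf
  have hv : v * ((X 0 + X 1) * X 1 ^ m) = v * X 0 * X 1 ^ m + v * X 1 ^ (m + 1) := by ring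
  rw [hv, map_add, map_add, lowCoeffSum_mul_X_zero_pow_of_lt _ (by omega),
    lowCoeffSum_mul_X_zero_mul_X_one_pow, lowCoeffSum_mul_X_one_pow_succ, zero_add,
    CharTwo.add_self_eq_zero]

theorem lowCoeffSum_X_add_X_pow {k j : ℕ} (hkj : k ≤ j) :
    lowCoeffSum k j ((X 0 + X 1 : MvPolynomial (Fin 2) R) ^ j) =
      ∑ a ∈ range (k + 1), (j.choose a : R) := by
  rw [lowCoeffSum_apply]
  refine sum_congr rfl fun a ha => ?_
  have hle : a ≤ j := by have := mem_range.mp ha; omega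
  simp [coeff_add_pow, Nat.add_sub_cancel' hle]

end LowCoeffSum

theorem odd_sum_range_choose_add_two {k : ℕ} (hk : Even k) :
    Odd (∑ a ∈ range (k + 1), (k + 2).choose a) := by
  have h := Nat.sum_range_choose (k + 2)
  rw [sum_range_succ, sum_range_succ, Nat.choose_succ_self_right, Nat.choose_self] at h
  have : Even (∑ a ∈ range (k + 1), (k + 2).choose a + (k + 2) + 1) :=
    h ▸ (Nat.even_pow.mpr ⟨even_two, by omega⟩)
  simpa [Nat.even_add, hk, parity_simps] using this

theorem X_add_X_pow_mem_span_of_X_one_pow_mem {R : Type*} [CommRing R] [CharP R 2] {a b N : ℕ}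
    (h : (X 1 : MvPolynomial (Fin 2) R) ^ N ∈ Ideal.span {X 0 ^ a, X 1 * (X 0 + X 1) ^ b}) :
    (X 0 + X 1 : MvPolynomial (Fin 2) R) ^ N ∈ Ideal.span {X 0 ^ a, (X 0 + X 1) * X 1 ^ b} := by
  have hσ := Ideal.mem_map_of_mem (aeval ![(X 0 : MvPolynomial (Fin 2) R), X 0 + X 1]) h
  have hsum : (X 0 + (X 0 + X 1) : MvPolynomial (Fin 2) R) = X 1 := by
    rw [← add_assoc, CharTwo.add_self_eq_zero, zero_add]
  simpa [Ideal.map_span, Set.image_pair, hsum] using hσ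

theorem lowCoeffSum_X_add_X_pow_eq_one {k m : ℕ} (hk : Even k) (hkm : k < m)
    (hfrob : (X 0 + X 1 : MvPolynomial (Fin 2) (ZMod 2)) ^ m = X 0 ^ m + X 1 ^ m) :
    lowCoeffSum k (k + (m + 2)) ((X 0 + X 1 : MvPolynomial (Fin 2) (ZMod 2)) ^ (k + (m + 2))) =
      1 := by
  rw [show k + (m + 2) = k + 2 + m by omega, pow_add, hfrob, mul_add, map_add,
    lowCoeffSum_mul_X_zero_pow_of_lt _ hkm, zero_add, lowCoeffSum_mul_X_one_pow m (by omega),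
    lowCoeffSum_X_add_X_pow (by omega), ← Nat.cast_sum, ZMod.natCast_eq_one_iff_odd]
  exact odd_sum_range_choose_add_two hk

theorem stmt_7_general (n₁ n₂ : ℕ) (h₁ : 1 ≤ n₁) (heven : Even n₁)
    (hlt : n₁ + 2 < n₂)
    (hbin : ∀ i, 0 < i → i < n₂ - 2 → Even ((n₂ - 2).choose i))
    (I : Ideal (MvPolynomial (Fin 2) (ZMod 2)))
    (hI : I = Ideal.span {X 0 ^ (n₁ + 1), X 1 * (X 0 + X 1) ^ n₂}) :
    (X 0 : MvPolynomial (Fin 2) (ZMod 2)) ^ n₁ * X 1 ^ n₂ - X 1 ^ (n₁ + n₂) ∈ I ∧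
    (X 1 : MvPolynomial (Fin 2) (ZMod 2)) ^ (n₁ + n₂) ∉ I := by
  obtain ⟨m, rfl⟩ : ∃ m, n₂ = m + 2 := ⟨n₂ - 2, by omega⟩
  simp only [Nat.add_sub_cancel] at hbin
  subst hI
  constructor
  · rw [← Ideal.Quotient.eq, map_mul, map_pow, map_pow, map_pow]
    refine pow_mul_pow_eq_pow_add ?_ heven (by omega) hbin ?_ ?_
    · have h2 : (2 : MvPolynomial (Fin 2) (ZMod 2)) = 0 := CharTwo.two_eq_zero
      rw [← map_ofNat (Ideal.Quotient.mk _) 2, h2, map_zero]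
    · rw [← map_pow, Ideal.Quotient.eq_zero_iff_mem]
      exact Ideal.subset_span (by simp)
    · rw [← map_add, ← map_pow, ← map_mul, Ideal.Quotient.eq_zero_iff_mem]
      exact Ideal.subset_span (by simp)
  · intro hmem
    obtain ⟨k, rfl⟩ : ∃ k, n₁ = k + 1 := ⟨n₁ - 1, by omega⟩
    have hfrob := add_pow_eq_add_pow_of_even_choose CharTwo.two_eq_zero (by omega) hbin
      (X 0 : MvPolynomial (Fin 2) (ZMod 2)) (X 1)
    have hzero := lowCoeffSum_eq_zero_of_mem_span (X_add_X_pow_mem_span_of_X_one_pow_mem hmem)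
    rw [lowCoeffSum_X_add_X_pow_eq_one heven (by omega) hfrob] at hzero
    exact one_ne_zero hzero

theorem stmt_7 (n₁ n₂ : ℕ) (h₁ : 1 ≤ n₁) (h₂ : 1 ≤ n₂) (heven : Even n₁)
    (hlt : n₁ + 2 < n₂)
    (hbin : ∀ i, 0 < i → i < n₂ - 2 → Even ((n₂ - 2).choose i))
    (I : Ideal (MvPolynomial (Fin 2) (ZMod 2)))
    (hI : I = Ideal.span {X 0 ^ (n₁ + 1), X 1 * (X 0 + X 1) ^ n₂}) :
    (X 0 : MvPolynomial (Fin 2) (ZMod 2)) ^ n₁ * X 1 ^ n₂ - X 1 ^ (n₁ + n₂) ∈ I ∧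
    (X 1 : MvPolynomial (Fin 2) (ZMod 2)) ^ (n₁ + n₂) ∉ I :=
  stmt_7_general n₁ n₂ h₁ heven hlt hbin I hI
end

section
/- Let m ≥ 1 and let n₁,…,n_m ≥ 1 and s₁,…,s_m be integers with n_j ≤ 2^{s_j} − 1 < 2n_j for every j. Let R = (ℤ/2)[y₁,…,y_m]/⟨y₁^{n₁+1},…,y_m^{n_m+1}⟩, and write ȳ_j for the image of y_j in R. Then in the tensor product R ⊗_{ℤ/2} R one has ∏_{j=1}^{m} (1 ⊗ ȳ_j + ȳ_j ⊗ 1)^{2^{s_j}−1} ≠ 0. -/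
/-! Map `R ⊗ R` to the polynomial ring in variables `x_j = y_j ⊗ 1`, `x'_j = 1 ⊗ y_j`, truncated at
the same exponents. In characteristic 2 all binomial coefficients of `(x + x')^(2^s - 1)` are odd,
so the image of the product is the sum of all monomials `∏ x_j^k_j x'_j^(2^s_j - 1 - k_j)`, and the
choice `k_j = min n_j (2^s_j - 1)` survives the truncation because `2^s_j - 1 ≤ 2 n_j`. -/

open MvPolynomial TensorProduct Finset

theorem add_pow_two_pow_sub_one {R : Type*} [CommRing R] [CharP R 2] (a b : R) (t : ℕ) :
    (a + b) ^ (2 ^ t - 1) = ∑ k ∈ range (2 ^ t), a ^ k * b ^ (2 ^ t - 1 - k) := by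
  induction t with
  | zero => simp
  | succ t ih =>
    have hsplit : 2 ^ (t + 1) - 1 = 2 ^ t + (2 ^ t - 1) := by
      have := Nat.one_le_two_pow (n := t); rw [pow_succ]; omega
    rw [hsplit, pow_add, add_pow_char_pow, ih, add_mul, mul_sum, mul_sum, pow_succ, mul_two,
      sum_range_add, add_comm]
    congr 1 <;> refine sum_congr rfl fun k hk => ?_ <;> rw [mem_range] at hk
    · rw [show 2 ^ t + (2 ^ t - 1) - k = 2 ^ t + (2 ^ t - 1 - k) by omega, pow_add]
      ring
    · rw [show 2 ^ t + (2 ^ t - 1) - (2 ^ t + k) = 2 ^ t - 1 - k by omega, pow_add]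
      ring

namespace MvPolynomial

variable {R σ τ : Type*} [CommRing R]

variable (R) in
noncomputable def truncIdeal (n : σ → ℕ) : Ideal (MvPolynomial σ R) :=
  Ideal.span {p | ∃ i, p = X i ^ (n i + 1)}

theorem X_pow_mem_truncIdeal (n : σ → ℕ) (i : σ) :
    (X i ^ (n i + 1) : MvPolynomial σ R) ∈ truncIdeal R n :=
  Ideal.subset_span ⟨i, rfl⟩

theorem mem_truncIdeal_iff {n : σ → ℕ} {p : MvPolynomial σ R} :
    p ∈ truncIdeal R n ↔ ∀ d ∈ p.support, ∃ i, n i < d i := by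
  have : {p : MvPolynomial σ R | ∃ i, p = X i ^ (n i + 1)} =
      (fun d => monomial d 1) '' Set.range fun i => Finsupp.single i (n i + 1) := by
    ext p
    simp [X_pow_eq_monomial, eq_comm]
  rw [truncIdeal, this, mem_ideal_span_monomial_image]
  simp only [Set.mem_range, exists_exists_eq_and, Finsupp.single_le_iff, Nat.add_one_le_iff]

theorem truncIdeal_le_comap_rename {f : σ → τ} {n : σ → ℕ} {n' : τ → ℕ}
    (h : ∀ i, n' (f i) = n i) : truncIdeal R n ≤ (truncIdeal R n').comap (rename f) := by
  rw [truncIdeal, Ideal.span_le]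
  rintro _ ⟨i, rfl⟩
  simpa [h] using X_pow_mem_truncIdeal n' (f i)

theorem prod_X_inl_pow_mul_X_inr_pow [Fintype σ] (k l : σ → ℕ) :
    ∏ j, X (Sum.inl j) ^ k j * X (Sum.inr j) ^ l j =
      (monomial (Finsupp.equivFunOnFinite.symm (Sum.elim k l)) 1 : MvPolynomial (σ ⊕ σ) R) := by
  rw [monomial_eq, C_1, one_mul, Finsupp.prod_fintype _ _ fun _ => pow_zero _,
    Fintype.prod_sum_type, prod_mul_distrib]
  rfl

theorem coeff_prod_add_pow_two_pow_sub_one [Fintype σ] [CharP R 2] (t : σ → ℕ) {k : σ → ℕ}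
    (hk : ∀ j, k j < 2 ^ t j) :
    coeff (Finsupp.equivFunOnFinite.symm (Sum.elim k fun j => 2 ^ t j - 1 - k j))
      (∏ j, (X (Sum.inl j) + X (Sum.inr j) : MvPolynomial (σ ⊕ σ) R) ^ (2 ^ t j - 1)) = 1 := by
  classical
  simp_rw [add_pow_two_pow_sub_one, prod_univ_sum, prod_X_inl_pow_mul_X_inr_pow, coeff_sum,
    coeff_monomial]
  rw [sum_eq_single_of_mem k (Fintype.mem_piFinset.2 fun j => mem_range.2 (hk j)), if_pos rfl]
  intro k' _ hne
  refine if_neg fun heq => hne ?_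
  funext j
  simpa using DFunLike.congr_fun heq (Sum.inl j)

theorem prod_add_pow_two_pow_sub_one_notMem_truncIdeal [Fintype σ] [CharP R 2] {n t : σ → ℕ}
    (h : ∀ j, 2 ^ t j - 1 ≤ 2 * n j) :
    ∏ j, (X (Sum.inl j) + X (Sum.inr j) : MvPolynomial (σ ⊕ σ) R) ^ (2 ^ t j - 1) ∉
      truncIdeal R (Sum.elim n n) := by
  have : Nontrivial R := CharP.nontrivial_of_char_ne_one (v := 2) (by norm_num)
  have hk (j : σ) : min (n j) (2 ^ t j - 1) < 2 ^ t j := by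
    have := Nat.one_le_two_pow (n := t j); omega
  rw [mem_truncIdeal_iff]
  push Not
  refine ⟨Finsupp.equivFunOnFinite.symm
    (Sum.elim (fun j => min (n j) (2 ^ t j - 1)) fun j => 2 ^ t j - 1 - min (n j) (2 ^ t j - 1)),
    mem_support_iff.2 ?_, ?_⟩
  · rw [coeff_prod_add_pow_two_pow_sub_one t hk]
    exact one_ne_zero
  · rintro (j | j) <;> simp only [Finsupp.coe_equivFunOnFinite_symm, Sum.elim_inl, Sum.elim_inr]
    · omega
    · have := h j; omega

variable (R) in
noncomputable def truncTensorHom (n : σ → ℕ) :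
    (MvPolynomial σ R ⧸ truncIdeal R n) ⊗[R] (MvPolynomial σ R ⧸ truncIdeal R n) →ₐ[R]
      MvPolynomial (σ ⊕ σ) R ⧸ truncIdeal R (Sum.elim n n) :=
  Algebra.TensorProduct.productMap
    (Ideal.quotientMapₐ _ (rename Sum.inl) (truncIdeal_le_comap_rename fun _ => rfl))
    (Ideal.quotientMapₐ _ (rename Sum.inr) (truncIdeal_le_comap_rename fun _ => rfl))

theorem truncTensorHom_one_tmul_add_tmul_one (n : σ → ℕ) (j : σ) :
    truncTensorHom R n (1 ⊗ₜ Ideal.Quotient.mk _ (X j) + Ideal.Quotient.mk _ (X j) ⊗ₜ 1) =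
      Ideal.Quotient.mk _ (X (Sum.inl j) + X (Sum.inr j)) := by
  rw [map_add, truncTensorHom, Algebra.TensorProduct.productMap_apply_tmul,
    Algebra.TensorProduct.productMap_apply_tmul, map_one, map_one, one_mul, mul_one,
    Ideal.quotient_map_mkₐ, Ideal.quotient_map_mkₐ]
  simp [add_comm]

theorem truncTensorHom_prod_pow [Fintype σ] (n N : σ → ℕ) :
    truncTensorHom R n
        (∏ j, (1 ⊗ₜ Ideal.Quotient.mk _ (X j) + Ideal.Quotient.mk _ (X j) ⊗ₜ 1) ^ N j) =
      Ideal.Quotient.mk _ (∏ j, (X (Sum.inl j) + X (Sum.inr j)) ^ N j) := by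
  rw [← AlgHom.coe_toRingHom, map_prod]
  simp only [map_prod, map_pow, AlgHom.coe_toRingHom, truncTensorHom_one_tmul_add_tmul_one]

end MvPolynomial

theorem stmt_10_general (m : ℕ) (n s : Fin m → ℕ)
    (hs' : ∀ j, 2 ^ s j - 1 < 2 * n j)
    (I : Ideal (MvPolynomial (Fin m) (ZMod 2)))
    (hI : I = Ideal.span { p | ∃ j : Fin m, p = X j ^ (n j + 1) }) :
    (∏ j : Fin m,
      ((1 : MvPolynomial (Fin m) (ZMod 2) ⧸ I) ⊗ₜ[ZMod 2] (Ideal.Quotient.mk I (X j))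
        + (Ideal.Quotient.mk I (X j)) ⊗ₜ[ZMod 2] 1) ^ (2 ^ s j - 1)) ≠ 0 := by
  obtain rfl : I = truncIdeal (ZMod 2) n := hI
  intro h
  apply prod_add_pow_two_pow_sub_one_notMem_truncIdeal (R := ZMod 2) fun j => (hs' j).le
  rw [← Ideal.Quotient.eq_zero_iff_mem, ← truncTensorHom_prod_pow, h, map_zero]

theorem stmt_10 (m : ℕ) (hm : 1 ≤ m) (n s : Fin m → ℕ)
    (hn : ∀ j, 1 ≤ n j)
    (hs : ∀ j, n j ≤ 2 ^ s j - 1) (hs' : ∀ j, 2 ^ s j - 1 < 2 * n j)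
    (I : Ideal (MvPolynomial (Fin m) (ZMod 2)))
    (hI : I = Ideal.span { p | ∃ j : Fin m, p = X j ^ (n j + 1) }) :
    (∏ j : Fin m,
      ((1 : MvPolynomial (Fin m) (ZMod 2) ⧸ I) ⊗ₜ[ZMod 2] (Ideal.Quotient.mk I (X j))
        + (Ideal.Quotient.mk I (X j)) ⊗ₜ[ZMod 2] 1) ^ (2 ^ s j - 1)) ≠ 0 :=
  stmt_10_general m n s hs' I hI
end

section
/- Let n ≥ 3. Work in the polynomial ring A = (ℤ/2)[y₁,…,y_n] and let I ⊆ A be the ideal generated by y₁² and by y_j·(y_{j−1} + y_j) for j = 2,…,n. Then y₁·y₂·⋯·y_n − y_n^{n} ∈ I (i.e. y₁ y₂ ⋯ y_n = y_n^{n} in R = A/I), and y_n^{n} ∉ I (i.e. y_n^{n} ≠ 0 in R). -/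
/-!
In `R` the relation `y_j² = y_{j-1} y_j` lets a factor `y_n` of `y_k ⋯ y_n` be traded for the
missing `y_{k-1}` (move it down one variable at a time), so `y_n^{m+1} = y_{n-m} ⋯ y_n` by
induction, and `y_n^n = y_1 ⋯ y_n`.

For `y_n^n ∉ I` we use a linear functional on `A` that vanishes on `I` and takes the value 1
on `y_n^n`: it adds up the coefficients of the monomials `y^e` with `|e| = n` and
`e_1 + ⋯ + e_k ≤ k` for all `k` (exactly the monomials equal to `y_1 ⋯ y_n` in `R`). After
multiplication by any monomial, `y_1²` violates the condition at `k = 1`, while the two monomials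
of `y_j (y_{j-1} + y_j)` satisfy it simultaneously and cancel mod 2.
-/

open MvPolynomial Finset

section Chain

variable {M : Type*} [CommMonoid M] {x : ℕ → M}

theorem prod_range_mul_eq_mul_succ {m j : ℕ} (hj : j < m) (hx : x j * x j = x (j + 1) * x j) :
    (∏ i ∈ range m, x i) * x j = (∏ i ∈ range m, x i) * x (j + 1) := by
  rw [← mul_prod_erase _ _ (mem_range.2 hj), mul_right_comm, hx]
  ac_rfl

theorem prod_range_mul_eq_mul_of_le {m j : ℕ} (hj : j ≤ m)
    (hx : ∀ i < m, x i * x i = x (i + 1) * x i) :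
    (∏ i ∈ range m, x i) * x 0 = (∏ i ∈ range m, x i) * x j := by
  induction j with
  | zero => rfl
  | succ j ih => rw [ih (by omega), prod_range_mul_eq_mul_succ (by omega) (hx j (by omega))]

theorem pow_eq_prod_range (m : ℕ) (hx : ∀ i, i + 1 < m → x i * x i = x (i + 1) * x i) :
    x 0 ^ m = ∏ i ∈ range m, x i := by
  induction m with
  | zero => simp
  | succ m ih =>
    rw [pow_succ, ih fun i hi => hx i (by omega),
      prod_range_mul_eq_mul_of_le le_rfl fun i hi => hx i (by omega), prod_range_succ]

theorem pow_eq_prod_univ_of_mul_self_eq {n : ℕ} (hn : 0 < n) (y : Fin n → M)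
    (hy : ∀ i j : Fin n, (i : ℕ) + 1 = j → y j * y j = y i * y j) :
    y ⟨n - 1, by omega⟩ ^ n = ∏ j, y j := by
  let z (k : ℕ) : M := y ⟨n - 1 - k, by omega⟩
  have hz (k : ℕ) (hk : k + 1 < n) : z k * z k = z (k + 1) * z k :=
    hy _ _ (by simp only; omega)
  calc y ⟨n - 1, by omega⟩ ^ n = ∏ k ∈ range n, z k := pow_eq_prod_range n hz
    _ = ∏ j, y (Fin.revPerm j) := by
      rw [← Fin.prod_univ_eq_prod_range]
      refine Fintype.prod_congr _ _ fun j => congrArg y (Fin.ext ?_)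
      simp only [Fin.revPerm_apply, Fin.val_rev]
      omega
    _ = ∏ j, y j := Equiv.prod_comp Fin.revPerm y

end Chain

theorem Fin.sub_mk_one_eq {n : ℕ} (h : 1 < n) {i j : Fin n} (hij : (i : ℕ) + 1 = j) :
    j - ⟨1, h⟩ = i := by
  ext
  rw [Fin.coe_sub_iff_le.2 (Fin.le_def.2 (by simp only; omega))]
  simp only
  omega

section Ballot

variable {n : ℕ}

-- `Fin n` is 0-indexed: `i : Fin n` stands for `y_{i+1}`.
def prefixSum (e : Fin n →₀ ℕ) (k : ℕ) : ℕ := ∑ i : Fin n with i.val < k, e i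

theorem prefixSum_add (e f : Fin n →₀ ℕ) (k : ℕ) :
    prefixSum (e + f) k = prefixSum e k + prefixSum f k :=
  sum_add_distrib

theorem prefixSum_single (a : Fin n) (m k : ℕ) :
    prefixSum (Finsupp.single a m) k = if (a : ℕ) < k then m else 0 := by
  simp [prefixSum, Finsupp.single_apply]

theorem prefixSum_mono (e : Fin n →₀ ℕ) : Monotone (prefixSum e) := fun _ _ hkl =>
  sum_le_sum_of_subset (monotone_filter_right _ fun _ _ h => lt_of_lt_of_le h hkl)

def IsBallot (e : Fin n →₀ ℕ) : Prop := prefixSum e n = n ∧ ∀ k, prefixSum e k ≤ k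

theorem isBallot_single_last (h : 0 < n) :
    IsBallot (Finsupp.single (⟨n - 1, by omega⟩ : Fin n) n) := by
  simp only [IsBallot, prefixSum_single]
  exact ⟨if_pos (by omega), fun k => by split_ifs <;> omega⟩

theorem not_isBallot_add_single (e : Fin n →₀ ℕ) {a : Fin n} {m : ℕ} (h : (a : ℕ) + 1 < m) :
    ¬ IsBallot (e + Finsupp.single a m) := fun hb => by
  have := hb.2 (a + 1)
  rw [prefixSum_add, prefixSum_single, if_pos (Nat.lt_succ_self _)] at this
  omega

theorem isBallot_add_single_add_single_iff (e : Fin n →₀ ℕ) {a b : Fin n}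
    (hab : (a : ℕ) + 1 = b) :
    IsBallot (e + Finsupp.single a 1 + Finsupp.single b 1) ↔ IsBallot (e + Finsupp.single b 2) := by
  have hbn := b.isLt
  simp only [IsBallot, prefixSum_add, prefixSum_single]
  constructor
  · rintro ⟨htot, hle⟩
    refine ⟨by split_ifs at htot ⊢ <;> omega, fun k => ?_⟩
    have hk := hle k
    split_ifs at hk ⊢ <;> omega
  · rintro ⟨htot, hle⟩
    refine ⟨by split_ifs at htot ⊢ <;> omega, fun k => ?_⟩
    have hk := hle k
    obtain rfl | hkb := eq_or_ne k b
    · -- the bound at `b` follows from the stronger bound at `b + 1`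
      have hb := hle (b + 1)
      have hmono := prefixSum_mono e (Nat.le_add_right b 1)
      split_ifs at hk hb ⊢ <;> omega
    · split_ifs at hk ⊢ <;> omega

end Ballot

section Functional

variable {σ R : Type*} [CommSemiring R]

theorem LinearMap.eq_zero_of_mem_ideal_span {φ : MvPolynomial σ R →ₗ[R] R}
    {S : Set (MvPolynomial σ R)} (hS : ∀ g ∈ S, ∀ e, φ (monomial e 1 * g) = 0)
    {p : MvPolynomial σ R} (hp : p ∈ Ideal.span S) : φ p = 0 := by
  suffices ∀ q, φ (q * p) = 0 by simpa using this 1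
  induction hp using Submodule.span_induction with
  | mem g hg =>
    have : φ ∘ₗ LinearMap.mulRight R g = 0 :=
      (basisMonomials σ R).ext fun e => by simpa using hS g hg e
    exact LinearMap.congr_fun this
  | zero => simp
  | add a b _ _ ha hb => intro q; rw [mul_add, map_add, ha, hb, add_zero]
  | smul a y _ hy => intro q; rw [smul_eq_mul, ← mul_assoc]; exact hy _

end Functional

open Classical in
noncomputable def ballotFunctional (n : ℕ) : MvPolynomial (Fin n) (ZMod 2) →ₗ[ZMod 2] ZMod 2 :=
  (basisMonomials (Fin n) (ZMod 2)).constr (ZMod 2) fun e => if IsBallot e then 1 else 0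

open Classical in
theorem ballotFunctional_monomial {n : ℕ} (e : Fin n →₀ ℕ) :
    ballotFunctional n (monomial e 1) = if IsBallot e then 1 else 0 := by
  simpa [ballotFunctional] using (basisMonomials (Fin n) (ZMod 2)).constr_basis (ZMod 2)
    (fun e => if IsBallot e then 1 else 0) e

theorem ballotFunctional_monomial_mul_X_sq {n : ℕ} (e : Fin n →₀ ℕ) {a : Fin n}
    (ha : (a : ℕ) = 0) : ballotFunctional n (monomial e 1 * X a ^ 2) = 0 := by
  rw [X_pow_eq_monomial, monomial_mul, one_mul, ballotFunctional_monomial,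
    if_neg (not_isBallot_add_single e (by omega))]

theorem ballotFunctional_monomial_mul_X_mul_add {n : ℕ} (e : Fin n →₀ ℕ) {a b : Fin n}
    (hab : (a : ℕ) + 1 = b) : ballotFunctional n (monomial e 1 * (X b * (X a + X b))) = 0 := by
  have hmixed : monomial e (1 : ZMod 2) * (X b * X a) =
      monomial (e + Finsupp.single a 1 + Finsupp.single b 1) 1 := by
    rw [X, X, monomial_mul, monomial_mul, one_mul, one_mul, add_comm (Finsupp.single b 1),
      add_assoc]
  have hsquare :
      monomial e (1 : ZMod 2) * (X b * X b) = monomial (e + Finsupp.single b 2) 1 := by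
    rw [← pow_two, X_pow_eq_monomial, monomial_mul, one_mul]
  rw [mul_add, mul_add, map_add, hmixed, hsquare, ballotFunctional_monomial,
    ballotFunctional_monomial, isBallot_add_single_add_single_iff e hab, CharTwo.add_self_eq_zero]

theorem stmt_11 (n : ℕ) (hn : 3 ≤ n)
    (I : Ideal (MvPolynomial (Fin n) (ZMod 2)))
    (hI : I = Ideal.span ({X (⟨0, by omega⟩ : Fin n) ^ 2} ∪
      { p | ∃ j : Fin n, 0 < (j : ℕ) ∧ p = X j * (X (j - ⟨1, by omega⟩) + X j) })) :
    (∏ j : Fin n, X j) - (X (⟨n - 1, by omega⟩ : Fin n)) ^ n ∈ I ∧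
    (X (⟨n - 1, by omega⟩ : Fin n) : MvPolynomial (Fin n) (ZMod 2)) ^ n ∉ I := by
  constructor
  · have hrel (i j : Fin n) (hij : (i : ℕ) + 1 = j) :
        Ideal.Quotient.mk I (X j) * Ideal.Quotient.mk I (X j) =
          Ideal.Quotient.mk I (X i) * Ideal.Quotient.mk I (X j) := by
      have hgen : X j * (X i + X j) ∈ I := by
        rw [hI, ← Fin.sub_mk_one_eq (by omega) hij]
        exact Ideal.subset_span (Or.inr ⟨j, by omega, rfl⟩)
      rw [← map_mul, ← map_mul, Ideal.Quotient.mk_eq_mk_iff_sub_mem, CharTwo.sub_eq_add]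
      convert hgen using 1
      ring
    rw [← Ideal.Quotient.mk_eq_mk_iff_sub_mem, map_prod, map_pow]
    exact (pow_eq_prod_univ_of_mul_self_eq (by omega) _ hrel).symm
  · intro hmem
    have hvanish :=
      LinearMap.eq_zero_of_mem_ideal_span (φ := ballotFunctional n) ?_ (hI ▸ hmem)
    · rw [X_pow_eq_monomial, ballotFunctional_monomial,
        if_pos (isBallot_single_last (by omega))] at hvanish
      exact one_ne_zero hvanish
    rintro g (rfl | ⟨j, hj, rfl⟩) e
    · exact ballotFunctional_monomial_mul_X_sq e rfl
    · have hpred : ((⟨j - 1, by omega⟩ : Fin n) : ℕ) + 1 = j := by simp only; omega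
      rw [Fin.sub_mk_one_eq _ hpred]
      exact ballotFunctional_monomial_mul_X_mul_add e hpred
end

section
/- Let n ≥ 3 and let r be an integer with n ≤ 2^{r} − 1 < 2n. Let R = (ℤ/2)[y₁,…,y_n]/I where I is the ideal generated by y₁² and by y_j·(y_{j−1}+y_j) for j = 2,…,n, and write ȳ_n for the image of y_n in R. Then in the tensor product R ⊗_{ℤ/2} R one has (1 ⊗ ȳ_n + ȳ_n ⊗ 1)^{2^{r}−1} ≠ 0. -/
/-!
In `R` the relations read `y₁² = 0` and `y_j² = y_{j-1} y_j`, so every monomial is either zero or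
equal to a square-free one; in particular `ȳ_n ^ k = y_{n-k+1} ⋯ y_n` for `k ≤ n`. Taking the
coefficient of `y_{n-s+1} ⋯ y_n` in this normal form gives a linear functional on `R` with
`ȳ_n ^ k ↦ [k = s]`. Pairing the functionals for `s = 2 ^ r - 1 - n` and `s = n` against the
binomial expansion of `(1 ⊗ ȳ_n + ȳ_n ⊗ 1) ^ (2 ^ r - 1)` yields `(2 ^ r - 1).choose n`, which is
odd by Lucas' theorem.
-/

open MvPolynomial TensorProduct

theorem Nat.choose_two_pow_sub_one_mod_two (r : ℕ) {k : ℕ} (hk : k ≤ 2 ^ r - 1) :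
    (2 ^ r - 1).choose k % 2 = 1 := by
  induction r generalizing k with
  | zero => simp_all
  | succ r ih =>
    have hpow : 2 ^ (r + 1) = 2 * 2 ^ r := by ring
    have hpos : 1 ≤ 2 ^ r := Nat.one_le_two_pow
    have hdigit : (2 ^ (r + 1) - 1) % 2 = 1 := by omega
    have hhalf : (2 ^ (r + 1) - 1) / 2 = 2 ^ r - 1 := by omega
    have hchoose : (1).choose (k % 2) = 1 := by
      rcases Nat.mod_two_eq_zero_or_one k with h | h <;> simp [h]
    have lucas := Choose.choose_modEq_choose_mod_mul_choose_div_nat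
      (p := 2) (n := 2 ^ (r + 1) - 1) (k := k)
    rw [Nat.ModEq, hdigit, hhalf, hchoose, one_mul] at lucas
    rw [lucas, ih (by omega)]

section Functionals

variable {K A M : Type*} [CommRing K] [CommRing A] [Algebra K A] [AddCommGroup M] [Module K M]

noncomputable def Ideal.Quotient.liftLinear (I : Ideal A) (φ : A →ₗ[K] M)
    (hφ : ∀ a ∈ I, φ a = 0) : (A ⧸ I) →ₗ[K] M :=
  (I.restrictScalars K).liftQ φ hφ ∘ₗ (Submodule.Quotient.restrictScalarsEquiv K I).symm.toLinearMap

@[simp]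
theorem Ideal.Quotient.liftLinear_mk (I : Ideal A) (φ : A →ₗ[K] M) (hφ : ∀ a ∈ I, φ a = 0)
    (a : A) : Ideal.Quotient.liftLinear I φ hφ (Ideal.Quotient.mk I a) = φ a :=
  rfl

theorem map_eq_zero_of_mem_ideal_span {S : Set A} (φ : A →ₗ[K] M)
    (hS : ∀ g ∈ S, ∀ q, φ (q * g) = 0) {x : A} (hx : x ∈ Ideal.span S) : φ x = 0 := by
  suffices ∀ q, φ (q * x) = 0 by simpa using this 1
  induction hx using Submodule.span_induction with
  | mem g hg => exact hS g hg
  | zero => simp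
  | add x y _ _ hx hy => simp [mul_add, hx, hy]
  | smul c x _ hx => intro q; rw [smul_eq_mul, ← mul_assoc]; exact hx (q * c)

end Functionals

section MonomialFunctional

variable {σ K : Type*} [CommRing K]

noncomputable def MvPolynomial.monomialFunctional (f : (σ →₀ ℕ) → K) :
    MvPolynomial σ K →ₗ[K] K :=
  (basisMonomials σ K).constr K f

theorem MvPolynomial.monomialFunctional_monomial (f : (σ →₀ ℕ) → K) (a : σ →₀ ℕ) (c : K) :
    monomialFunctional f (monomial a c) = c * f a := by
  have hbasis : monomial a c = c • basisMonomials σ K a := by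
    rw [coe_basisMonomials, smul_monomial, smul_eq_mul, mul_one]
  rw [hbasis, map_smul, monomialFunctional, Module.Basis.constr_basis, smul_eq_mul]

theorem MvPolynomial.monomialFunctional_mul_eq_zero {f : (σ →₀ ℕ) → K} {g : MvPolynomial σ K}
    (h : ∀ a, monomialFunctional f (monomial a 1 * g) = 0) (q : MvPolynomial σ K) :
    monomialFunctional f (q * g) = 0 := by
  have : monomialFunctional f ∘ₗ LinearMap.mulRight K g = 0 :=
    (basisMonomials σ K).ext fun a => by simpa [coe_basisMonomials] using h a
  simpa using LinearMap.congr_fun this q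

end MonomialFunctional

namespace RealBott

variable {n : ℕ}

def tailDegree (a : Fin n →₀ ℕ) (i : ℕ) : ℕ := ∑ k ∈ Finset.univ.filter (i ≤ ·.val), a k

theorem tailDegree_add (a b : Fin n →₀ ℕ) (i : ℕ) :
    tailDegree (a + b) i = tailDegree a i + tailDegree b i := by
  simp [tailDegree, Finset.sum_add_distrib]

theorem tailDegree_single (j : Fin n) (c i : ℕ) :
    tailDegree (Finsupp.single j c) i = if i ≤ j then c else 0 := by
  simp [tailDegree, Finsupp.single_apply]

theorem tailDegree_antitone (a : Fin n →₀ ℕ) : Antitone (tailDegree a) := fun _ _ hii' =>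
  Finset.sum_le_sum_of_subset (Finset.monotone_filter_right _ fun _ _ h => hii'.trans h)

/-- `X i` stands for `y_{i+1}`. For `s ≤ n`, the monomial with exponent vector `a` equals
`y_{n-s+1} ⋯ y_n` in `R` exactly when this holds; otherwise its normal form is another square-free
monomial or zero. -/
def ReducesToTopProduct (s : ℕ) (a : Fin n →₀ ℕ) : Prop :=
  ∀ i, min s (n - i) ≤ tailDegree a i ∧ tailDegree a i ≤ s

theorem not_reducesToTopProduct_add_two_bot {s : ℕ} (hn : 2 ≤ n) (hs : s ≤ n) {bot : Fin n}
    (hbot : (bot : ℕ) = 0) (a : Fin n →₀ ℕ) :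
    ¬ ReducesToTopProduct s (a + Finsupp.single bot 2) := by
  intro h
  have h0 := (h 0).2
  have h1 := (h 1).1
  have hmono := tailDegree_antitone a zero_le_one
  simp only [tailDegree_add, tailDegree_single, hbot, min_le_iff] at h0 h1
  split_ifs at h0 h1 <;> omega

theorem reducesToTopProduct_add_iff {s : ℕ} {j j' : Fin n} (hj : (j' : ℕ) + 1 = j)
    (a : Fin n →₀ ℕ) :
    ReducesToTopProduct s (a + (Finsupp.single j 1 + Finsupp.single j' 1)) ↔
      ReducesToTopProduct s (a + Finsupp.single j 2) := by
  have hmono := tailDegree_antitone a (show (j' : ℕ) ≤ j by omega)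
  have hmono' := tailDegree_antitone a (show (j : ℕ) ≤ j + 1 by omega)
  unfold ReducesToTopProduct
  simp only [tailDegree_add, tailDegree_single, min_le_iff]
  constructor
  · intro h i
    have hi := h i
    have hj' := h j'
    rcases eq_or_ne i j with rfl | hij <;> split_ifs at hi hj' ⊢ <;> omega
  · intro h i
    have hi := h i
    have hj1 := h (j + 1)
    rcases eq_or_ne i j with rfl | hij <;> split_ifs at hi hj1 ⊢ <;> omega

theorem reducesToTopProduct_single_top_iff {s : ℕ} (hs : s ≤ n) {top : Fin n}
    (htop : (top : ℕ) + 1 = n) (k : ℕ) :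
    ReducesToTopProduct s (Finsupp.single top k) ↔ k = s := by
  unfold ReducesToTopProduct
  simp only [tailDegree_single, min_le_iff]
  constructor
  · intro h
    have h0 := h 0
    split_ifs at h0 <;> omega
  · rintro rfl i
    split_ifs <;> omega

section Coefficient

open Classical

noncomputable def topProductCoeff (n s : ℕ) : MvPolynomial (Fin n) (ZMod 2) →ₗ[ZMod 2] ZMod 2 :=
  monomialFunctional fun a => if ReducesToTopProduct s a then 1 else 0

theorem topProductCoeff_monomial (s : ℕ) (a : Fin n →₀ ℕ) :
    topProductCoeff n s (monomial a 1) = if ReducesToTopProduct s a then 1 else 0 := by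
  rw [topProductCoeff, monomialFunctional_monomial, one_mul]

theorem topProductCoeff_mul_X_bot_sq {s : ℕ} (hn : 2 ≤ n) (hs : s ≤ n) {bot : Fin n}
    (hbot : (bot : ℕ) = 0) (q : MvPolynomial (Fin n) (ZMod 2)) :
    topProductCoeff n s (q * X bot ^ 2) = 0 :=
  monomialFunctional_mul_eq_zero (fun a => by
    rw [X_pow_eq_monomial, monomial_mul, one_mul, ← topProductCoeff,
      topProductCoeff_monomial, if_neg (not_reducesToTopProduct_add_two_bot hn hs hbot a)]) q

theorem topProductCoeff_mul_relation {s : ℕ} {j j' : Fin n} (hj : (j' : ℕ) + 1 = j)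
    (q : MvPolynomial (Fin n) (ZMod 2)) :
    topProductCoeff n s (q * (X j * (X j' + X j))) = 0 := by
  have hrel : (X j * (X j' + X j) : MvPolynomial (Fin n) (ZMod 2)) =
      monomial (Finsupp.single j 1 + Finsupp.single j' 1) 1 + monomial (Finsupp.single j 2) 1 := by
    simp only [X, monomial_mul, mul_add, one_mul]
    rw [← Finsupp.single_add]
  refine monomialFunctional_mul_eq_zero (fun a => ?_) q
  -- both monomials of the relation have the same coefficient, and `1 + 1 = 0`
  rw [hrel, mul_add, monomial_mul, monomial_mul, one_mul, map_add, ← topProductCoeff,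
    topProductCoeff_monomial, topProductCoeff_monomial, reducesToTopProduct_add_iff hj]
  exact CharTwo.add_self_eq_zero _

theorem topProductCoeff_X_top_pow (s : ℕ) (hs : s ≤ n) {top : Fin n}
    (htop : (top : ℕ) + 1 = n) (k : ℕ) :
    topProductCoeff n s (X top ^ k) = if k = s then 1 else 0 := by
  rw [X_pow_eq_monomial, topProductCoeff_monomial]
  exact if_congr (reducesToTopProduct_single_top_iff hs htop k) rfl rfl

end Coefficient

end RealBott

theorem TensorProduct.lid_map_add_pow_eq_choose {K A : Type*} [CommRing K] [CommRing A]
    [Algebra K A] (F G : A →ₗ[K] K) (y : A) {s t : ℕ}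
    (hF : ∀ i, F (y ^ i) = if i = s then 1 else 0) (hG : ∀ i, G (y ^ i) = if i = t then 1 else 0) :
    TensorProduct.lid K K (TensorProduct.map F G ((1 ⊗ₜ[K] y + y ⊗ₜ[K] 1) ^ (s + t))) =
      (s + t).choose t := by
  have hterm : ∀ k, (1 ⊗ₜ[K] y) ^ k * (y ⊗ₜ[K] 1) ^ (s + t - k) * ((s + t).choose k : A ⊗[K] A) =
      ((s + t).choose k) • ((y ^ (s + t - k)) ⊗ₜ[K] (y ^ k)) := by
    intro k
    rw [Algebra.TensorProduct.tmul_pow, Algebra.TensorProduct.tmul_pow, one_pow, one_pow,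
      Algebra.TensorProduct.tmul_mul_tmul, one_mul, mul_one, mul_comm, nsmul_eq_mul]
  simp only [add_pow, hterm, map_sum, map_nsmul, map_tmul, lid_tmul, hF, hG, smul_eq_mul]
  rw [Finset.sum_eq_single t]
  · simp
  · intro k _ hk; simp [hk]
  · intro ht; simp at ht

theorem stmt_12 (n r : ℕ) (hn : 3 ≤ n) (hr : n ≤ 2 ^ r - 1) (hr' : 2 ^ r - 1 < 2 * n)
    (I : Ideal (MvPolynomial (Fin n) (ZMod 2)))
    (hI : I = Ideal.span ({X (⟨0, by omega⟩ : Fin n) ^ 2} ∪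
      { p | ∃ j : Fin n, 0 < (j : ℕ) ∧ p = X j * (X (j - ⟨1, by omega⟩) + X j) })) :
    ((1 : MvPolynomial (Fin n) (ZMod 2) ⧸ I)
        ⊗ₜ[ZMod 2] (Ideal.Quotient.mk I (X (⟨n - 1, by omega⟩ : Fin n)))
      + (Ideal.Quotient.mk I (X (⟨n - 1, by omega⟩ : Fin n)))
        ⊗ₜ[ZMod 2] 1) ^ (2 ^ r - 1) ≠ 0 := by
  have hvanish : ∀ s ≤ n, ∀ x ∈ I, RealBott.topProductCoeff n s x = 0 := by
    intro s hs x hx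
    rw [hI] at hx
    refine map_eq_zero_of_mem_ideal_span _ ?_ hx
    rintro g (rfl | ⟨j, hj, rfl⟩)
    · exact RealBott.topProductCoeff_mul_X_bot_sq (by omega) hs rfl
    · have hpred : ((j - ⟨1, by omega⟩ : Fin n) : ℕ) + 1 = j := by
        rw [Fin.sub_val_of_le (show (⟨1, by omega⟩ : Fin n) ≤ j from hj)]
        change (j : ℕ) - 1 + 1 = j
        omega
      exact RealBott.topProductCoeff_mul_relation hpred
  set y := Ideal.Quotient.mk I (X (⟨n - 1, by omega⟩ : Fin n))
  have hcoeff : ∀ s (hs : s ≤ n) i,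
      Ideal.Quotient.liftLinear I (RealBott.topProductCoeff n s) (hvanish s hs) (y ^ i) =
        if i = s then 1 else 0 := fun s hs i => by
    rw [← map_pow, Ideal.Quotient.liftLinear_mk,
      RealBott.topProductCoeff_X_top_pow s hs (Nat.sub_add_cancel (by omega))]
  have hvalue := TensorProduct.lid_map_add_pow_eq_choose _ _ y
    (hcoeff (2 ^ r - 1 - n) (by omega)) (hcoeff n le_rfl)
  rw [Nat.sub_add_cancel hr] at hvalue
  intro hzero
  rw [hzero, map_zero, map_zero, eq_comm, ZMod.natCast_eq_zero_iff] at hvalue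
  have hodd := Nat.choose_two_pow_sub_one_mod_two r hr
  omega
end

section
/- Let R = (ℤ/2)[y₁,y₂,y₃]/I where I is the ideal generated by y₁², y₂·(y₁+y₂) and y₃², and write ȳ_j for the image of y_j in R. Then in the tensor product R ⊗_{ℤ/2} R one has (1 ⊗ ȳ₂ + ȳ₂ ⊗ 1)^{3} · (1 ⊗ ȳ₃ + ȳ₃ ⊗ 1) ≠ 0. -/
/-!
Pair `R ⊗ R` with `𝔽₂` through `φ ⊗ ψ`, where `φ, ψ : R → 𝔽₂` read off the coefficients of
`ȳ₂² = ȳ₁ȳ₂` and of `ȳ₂ȳ₃`. By the binomial theorem the element is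
`∑ C(3,i) C(1,j) • ȳ₂^(3-i) ȳ₃^(1-j) ⊗ ȳ₂^i ȳ₃^j`, and the only term not killed by `φ ⊗ ψ` is
`ȳ₂² ⊗ ȳ₂ȳ₃`, with coefficient `C(3,1) = 1` in `𝔽₂`.
-/

open MvPolynomial TensorProduct

section Quotient

variable {K A M : Type*}

theorem Ideal.restrictScalars_span_le_ker [CommSemiring K] [Semiring A] [Algebra K A]
    [AddCommMonoid M] [Module K M] {s : Set A} {l : A →ₗ[K] M}
    (h : ∀ g ∈ s, ∀ a : A, l (a * g) = 0) :
    (Ideal.span s).restrictScalars K ≤ LinearMap.ker l := by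
  intro f hf
  suffices ∀ a : A, l (a * f) = 0 by simpa using this 1
  induction hf using Submodule.span_induction with
  | mem g hg => exact h g hg
  | zero => simp
  | add x y _ _ hx hy => intro a; rw [mul_add, map_add, hx, hy, add_zero]
  | smul b x _ hx => intro a; rw [smul_eq_mul, ← mul_assoc]; exact hx (a * b)

variable [CommRing K] [CommRing A] [Algebra K A] [AddCommGroup M] [Module K M]

def Ideal.Quotient.liftₗ (I : Ideal A) (l : A →ₗ[K] M)
    (h : I.restrictScalars K ≤ LinearMap.ker l) : (A ⧸ I) →ₗ[K] M :=
  Submodule.liftQ _ l h ∘ₗ (Submodule.Quotient.restrictScalarsEquiv K I).symm.toLinearMap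

@[simp]
theorem Ideal.Quotient.liftₗ_mk (I : Ideal A) (l : A →ₗ[K] M)
    (h : I.restrictScalars K ≤ LinearMap.ker l) (a : A) :
    Ideal.Quotient.liftₗ I l h (Ideal.Quotient.mk I a) = l a :=
  rfl

end Quotient

section Binomial

open Finset

theorem Algebra.TensorProduct.one_tmul_add_tmul_one_pow_s13 {R A B : Type*} [CommSemiring R]
    [CommSemiring A] [Algebra R A] [CommSemiring B] [Algebra R B] (a : A) (b : B) (n : ℕ) :
    ((1 : A) ⊗ₜ[R] b + a ⊗ₜ[R] (1 : B)) ^ n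
      = ∑ p ∈ antidiagonal n, n.choose p.1 • ((a ^ p.2) ⊗ₜ[R] (b ^ p.1)) := by
  rw [(Commute.all (1 ⊗ₜ[R] b) (a ⊗ₜ[R] 1)).add_pow']
  simp only [Algebra.TensorProduct.tmul_pow, Algebra.TensorProduct.tmul_mul_tmul, one_pow,
    one_mul, mul_one]

theorem TensorProduct.mul'_map_one_tmul_add_tmul_one_pow_mul_pow {K A : Type*} [CommSemiring K]
    [CommSemiring A] [Algebra K A] (f g : A →ₗ[K] K) (b c : A) (m n : ℕ) :
    (LinearMap.mul' K K ∘ₗ TensorProduct.map f g)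
        (((1 : A) ⊗ₜ[K] b + b ⊗ₜ[K] 1) ^ m * ((1 : A) ⊗ₜ[K] c + c ⊗ₜ[K] 1) ^ n)
      = ∑ p ∈ antidiagonal m, ∑ q ∈ antidiagonal n,
          (m.choose p.1 * n.choose q.1) • (f (b ^ p.2 * c ^ q.2) * g (b ^ p.1 * c ^ q.1)) := by
  simp only [Algebra.TensorProduct.one_tmul_add_tmul_one_pow_s13, sum_mul_sum, smul_mul_smul,
    Algebra.TensorProduct.tmul_mul_tmul, map_sum, map_nsmul, LinearMap.comp_apply, map_tmul,
    LinearMap.mul'_apply]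

end Binomial

-- `X i` stands for the paper's `y_(i+1)`.
namespace BottM3

noncomputable section

abbrev P := MvPolynomial (Fin 3) (ZMod 2)

def ideal : Ideal P := Ideal.span {X 0 ^ 2, X 1 * (X 0 + X 1), X 2 ^ 2}

abbrev R := P ⧸ ideal

-- Both monomials of the relation `X 1 * (X 0 + X 1)` are counted, so that it is killed.
def dualX1Sq : P →ₗ[ZMod 2] ZMod 2 :=
  lcoeff (ZMod 2) (Finsupp.single 0 1 + Finsupp.single 1 1) + lcoeff (ZMod 2) (Finsupp.single 1 2)

def dualX1X2 : P →ₗ[ZMod 2] ZMod 2 :=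
  lcoeff (ZMod 2) (Finsupp.single 1 1 + Finsupp.single 2 1)

theorem X_mul_X_add_X : (X 1 * (X 0 + X 1) : P) =
    monomial (Finsupp.single 0 1 + Finsupp.single 1 1) 1 + monomial (Finsupp.single 1 2) 1 := by
  simp only [X, monomial_mul, mul_add, one_mul, add_comm (Finsupp.single (1 : Fin 3) 1),
    ← Finsupp.single_add]

theorem ideal_le_ker_dualX1Sq : ideal.restrictScalars (ZMod 2) ≤ LinearMap.ker dualX1Sq := by
  refine Ideal.restrictScalars_span_le_ker ?_
  simp only [Set.mem_insert_iff, Set.mem_singleton_iff, forall_eq_or_imp, forall_eq,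
    X_pow_eq_monomial, X_mul_X_add_X]
  simp [dualX1Sq, mul_add, coeff_mul_monomial', Finsupp.le_def, Fin.forall_fin_succ,
    CharTwo.add_self_eq_zero]

theorem ideal_le_ker_dualX1X2 : ideal.restrictScalars (ZMod 2) ≤ LinearMap.ker dualX1X2 := by
  refine Ideal.restrictScalars_span_le_ker ?_
  simp only [Set.mem_insert_iff, Set.mem_singleton_iff, forall_eq_or_imp, forall_eq,
    X_pow_eq_monomial, X_mul_X_add_X]
  simp [dualX1X2, mul_add, coeff_mul_monomial', Finsupp.le_def, Fin.forall_fin_succ]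

theorem X_pow_mul_X_pow (i j : ℕ) :
    (X 1 ^ i * X 2 ^ j : P) = monomial (Finsupp.single 1 i + Finsupp.single 2 j) 1 := by
  simp [X_pow_eq_monomial, monomial_mul]

theorem dualX1Sq_X_pow_mul_X_pow (i j : ℕ) :
    dualX1Sq (X 1 ^ i * X 2 ^ j) = if i = 2 ∧ j = 0 then 1 else 0 := by
  simp [X_pow_mul_X_pow, dualX1Sq, coeff_monomial, Finsupp.ext_iff, Fin.forall_fin_succ]

theorem dualX1X2_X_pow_mul_X_pow (i j : ℕ) :
    dualX1X2 (X 1 ^ i * X 2 ^ j) = if i = 1 ∧ j = 1 then 1 else 0 := by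
  simp [X_pow_mul_X_pow, dualX1X2, coeff_monomial, Finsupp.ext_iff, Fin.forall_fin_succ]

def pairing : R ⊗[ZMod 2] R →ₗ[ZMod 2] ZMod 2 :=
  LinearMap.mul' (ZMod 2) (ZMod 2) ∘ₗ
    TensorProduct.map (Ideal.Quotient.liftₗ _ dualX1Sq ideal_le_ker_dualX1Sq)
      (Ideal.Quotient.liftₗ _ dualX1X2 ideal_le_ker_dualX1X2)

theorem pairing_eq_one :
    pairing (((1 : R) ⊗ₜ[ZMod 2] (Ideal.Quotient.mk _ (X 1))
        + (Ideal.Quotient.mk _ (X 1)) ⊗ₜ[ZMod 2] 1) ^ 3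
      * ((1 : R) ⊗ₜ[ZMod 2] (Ideal.Quotient.mk _ (X 2))
        + (Ideal.Quotient.mk _ (X 2)) ⊗ₜ[ZMod 2] 1)) = 1 := by
  have expand := TensorProduct.mul'_map_one_tmul_add_tmul_one_pow_mul_pow
    (Ideal.Quotient.liftₗ _ dualX1Sq ideal_le_ker_dualX1Sq)
    (Ideal.Quotient.liftₗ _ dualX1X2 ideal_le_ker_dualX1X2)
    (Ideal.Quotient.mk ideal (X 1)) (Ideal.Quotient.mk ideal (X 2)) 3 1
  rw [pow_one] at expand
  refine expand.trans ?_
  simp only [← map_pow, ← map_mul, Ideal.Quotient.liftₗ_mk, dualX1Sq_X_pow_mul_X_pow,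
    dualX1X2_X_pow_mul_X_pow]
  simp [Finset.Nat.antidiagonal_succ]
  decide

end

end BottM3

theorem stmt_13 (I : Ideal (MvPolynomial (Fin 3) (ZMod 2)))
    (hI : I = Ideal.span {X 0 ^ 2, X 1 * (X 0 + X 1), X 2 ^ 2}) :
    ((1 : MvPolynomial (Fin 3) (ZMod 2) ⧸ I) ⊗ₜ[ZMod 2] (Ideal.Quotient.mk I (X 1))
        + (Ideal.Quotient.mk I (X 1)) ⊗ₜ[ZMod 2] 1) ^ 3
      * ((1 : MvPolynomial (Fin 3) (ZMod 2) ⧸ I) ⊗ₜ[ZMod 2] (Ideal.Quotient.mk I (X 2))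
        + (Ideal.Quotient.mk I (X 2)) ⊗ₜ[ZMod 2] 1) ≠ 0 := by
  subst hI
  intro h
  have vanish := (congrArg BottM3.pairing h).trans (map_zero _)
  exact one_ne_zero (BottM3.pairing_eq_one.symm.trans vanish)
end

section
/- Let R = (ℤ/2)[y₁,y₂,y₃]/I where I is the ideal generated by y₁², y₂·(y₁+y₂) and y₃·(y₂+y₃), and write ȳ_j for the image of y_j in R. Then in the tensor product R ⊗_{ℤ/2} R one has (1 ⊗ ȳ₂ + ȳ₂ ⊗ 1)^{2} · (1 ⊗ ȳ₃ + ȳ₃ ⊗ 1)^{3} ≠ 0. -/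
/-!
In characteristic 2 we have `(a + b) ^ 2 = a ^ 2 + b ^ 2`, so with `xᵢ = 1 ⊗ ȳᵢ`, `yᵢ = ȳᵢ ⊗ 1`
the relations of `R` expand the product to
`(ȳ₀ȳ₁ + ȳ₁ȳ₂) ⊗ ȳ₀ȳ₁ȳ₂ + ȳ₀ȳ₁ȳ₂ ⊗ (ȳ₀ȳ₁ + ȳ₁ȳ₂)`.
To see that this is nonzero, map `R` to an explicit model of the cohomology of the Bott tower,
a tower of three quadratic algebras over `𝔽₂`, and apply `ℓ ⊗ ℓ'` where `ℓ` reads off the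
coefficient of `ȳ₀ȳ₁` and `ℓ'` that of the top class `ȳ₀ȳ₁ȳ₂`: the result is `1 · 1 + 0 · 0 = 1`.
-/

open MvPolynomial TensorProduct

theorem two_eq_zero_of_algebra {K A : Type*} [CommRing K] [Ring A] [Algebra K A]
    (h2 : (2 : K) = 0) : (2 : A) = 0 := by
  rw [← map_ofNat (algebraMap K A) 2, h2, map_zero]

theorem add_sq_mul_add_pow_three_eq {T : Type*} [CommRing T] (h2 : (2 : T) = 0)
    {x₀ x₁ x₂ y₀ y₁ y₂ : T}
    (hx₀ : x₀ ^ 2 = 0) (hx₁ : x₁ ^ 2 = x₀ * x₁) (hx₂ : x₂ ^ 2 = x₁ * x₂)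
    (hy₀ : y₀ ^ 2 = 0) (hy₁ : y₁ ^ 2 = y₀ * y₁) (hy₂ : y₂ ^ 2 = y₁ * y₂) :
    (x₁ + y₁) ^ 2 * (x₂ + y₂) ^ 3
      = (y₀ * y₁ + y₁ * y₂) * (x₀ * x₁ * x₂) + y₀ * y₁ * y₂ * (x₀ * x₁ + x₁ * x₂) := by
  have hsq : (x₁ + y₁) ^ 2 = x₀ * x₁ + y₀ * y₁ := by
    linear_combination hx₁ + hy₁ + x₁ * y₁ * h2
  have hcube : (x₂ + y₂) ^ 3 = x₀ * x₁ * x₂ + x₁ * x₂ * y₂ + x₂ * y₁ * y₂ + y₀ * y₁ * y₂ := by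
    linear_combination (x₂ + x₁ + 3 * y₂) * hx₂ + x₂ * hx₁ + (y₂ + y₁ + 3 * x₂) * hy₂ + y₂ * hy₁
      + (x₁ * x₂ * y₂ + x₂ * y₁ * y₂) * h2
  rw [hsq, hcube]
  linear_combination (x₁ ^ 2 * x₂ + x₁ * x₂ * y₂) * hx₀ + x₀ * x₂ * y₂ * hx₁
    + (y₁ ^ 2 * y₂ + x₂ * y₁ * y₂) * hy₀ + x₂ * y₀ * y₂ * hy₁

theorem one_tmul_add_tmul_one_sq_mul_pow_three {K A : Type*} [CommRing K] [CommRing A]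
    [Algebra K A] (h2 : (2 : K) = 0) {y₀ y₁ y₂ : A}
    (h₀ : y₀ ^ 2 = 0) (h₁ : y₁ * (y₀ + y₁) = 0) (h₂ : y₂ * (y₁ + y₂) = 0) :
    ((1 : A) ⊗ₜ[K] y₁ + y₁ ⊗ₜ[K] 1) ^ 2 * ((1 : A) ⊗ₜ[K] y₂ + y₂ ⊗ₜ[K] 1) ^ 3
      = (y₀ * y₁ + y₁ * y₂) ⊗ₜ (y₀ * y₁ * y₂) + (y₀ * y₁ * y₂) ⊗ₜ (y₀ * y₁ + y₁ * y₂) := by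
  have h2A : (2 : A) = 0 := two_eq_zero_of_algebra h2
  have h₁' : y₁ ^ 2 = y₀ * y₁ := by linear_combination h₁ - y₀ * y₁ * h2A
  have h₂' : y₂ ^ 2 = y₁ * y₂ := by linear_combination h₂ - y₁ * y₂ * h2A
  rw [add_sq_mul_add_pow_three_eq (two_eq_zero_of_algebra h2)
    (x₀ := 1 ⊗ₜ y₀) (y₀ := y₀ ⊗ₜ 1) (x₁ := 1 ⊗ₜ y₁) (y₁ := y₁ ⊗ₜ 1) (x₂ := 1 ⊗ₜ y₂) (y₂ := y₂ ⊗ₜ 1)]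
  all_goals simp only [Algebra.TensorProduct.tmul_pow, Algebra.TensorProduct.tmul_mul_tmul,
    one_pow, mul_one, one_mul, h₀, h₁', h₂', tmul_zero, zero_tmul, add_mul, mul_add, add_tmul,
    tmul_add]

/- The mod-2 cohomology of the Bott tower `M¹ ← M² ← M³(1,0,1)`: each stage adjoins an element
`ω = ⟨0, 1⟩` with `ω ^ 2 = ω * ω'`, where `ω'` is the element adjoined at the previous stage
(`ω ^ 2 = 0` at the first one). With `bottGen = ![ω₀, ω₁, ω₂]`, the coordinates `z.re.im.im` and
`z.im.im.im` of `z : BottAlg₃` are its coefficients of `ω₀ω₁` and `ω₀ω₁ω₂`. -/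
abbrev BottAlg₁ := QuadraticAlgebra (ZMod 2) 0 0
abbrev BottAlg₂ := QuadraticAlgebra BottAlg₁ 0 ⟨0, 1⟩
abbrev BottAlg₃ := QuadraticAlgebra BottAlg₂ 0 ⟨0, 1⟩

def bottGen : Fin 3 → BottAlg₃ := ![.C (.C ⟨0, 1⟩), .C ⟨0, 1⟩, ⟨0, 1⟩]

theorem span_le_ker_aeval_bottGen :
    Ideal.span ({X 0 ^ 2, X 1 * (X 0 + X 1), X 2 * (X 1 + X 2)} :
        Set (MvPolynomial (Fin 3) (ZMod 2))) ≤ RingHom.ker (aeval bottGen) := by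
  simp only [Ideal.span_le, Set.insert_subset_iff, Set.singleton_subset_iff, SetLike.mem_coe,
    RingHom.mem_ker]
  refine ⟨?_, ?_, ?_⟩ <;> ext <;> simp [bottGen] <;> decide

def coeffω₀ω₁ : BottAlg₃ →+ ZMod 2 := AddMonoidHom.mk' (fun z => z.re.im.im) fun _ _ => rfl

def coeffω₀ω₁ω₂ : BottAlg₃ →+ ZMod 2 := AddMonoidHom.mk' (fun z => z.im.im.im) fun _ _ => rfl

theorem coeffω₀ω₁_bottGen :
    coeffω₀ω₁ (bottGen 0 * bottGen 1 + bottGen 1 * bottGen 2) = 1 ∧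
      coeffω₀ω₁ (bottGen 0 * bottGen 1 * bottGen 2) = 0 := by
  decide

theorem coeffω₀ω₁ω₂_bottGen :
    coeffω₀ω₁ω₂ (bottGen 0 * bottGen 1 + bottGen 1 * bottGen 2) = 0 ∧
      coeffω₀ω₁ω₂ (bottGen 0 * bottGen 1 * bottGen 2) = 1 := by
  decide

theorem stmt_14 (I : Ideal (MvPolynomial (Fin 3) (ZMod 2)))
    (hI : I = Ideal.span {X 0 ^ 2, X 1 * (X 0 + X 1), X 2 * (X 1 + X 2)}) :
    ((1 : MvPolynomial (Fin 3) (ZMod 2) ⧸ I) ⊗ₜ[ZMod 2] (Ideal.Quotient.mk I (X 1))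
        + (Ideal.Quotient.mk I (X 1)) ⊗ₜ[ZMod 2] 1) ^ 2
      * ((1 : MvPolynomial (Fin 3) (ZMod 2) ⧸ I) ⊗ₜ[ZMod 2] (Ideal.Quotient.mk I (X 2))
        + (Ideal.Quotient.mk I (X 2)) ⊗ₜ[ZMod 2] 1) ^ 3 ≠ 0 := by
  have hrel : ∀ g ∈ ({X 0 ^ 2, X 1 * (X 0 + X 1), X 2 * (X 1 + X 2)} : Set _),
      Ideal.Quotient.mk I g = 0 := fun g hg =>
    Ideal.Quotient.eq_zero_iff_mem.2 (hI ▸ Ideal.subset_span hg)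
  rw [one_tmul_add_tmul_one_sq_mul_pow_three (y₀ := Ideal.Quotient.mk I (X 0)) (by decide)
    (by rw [← map_pow]; exact hrel _ (by simp))
    (by rw [← map_add, ← map_mul]; exact hrel _ (by simp))
    (by rw [← map_add, ← map_mul]; exact hrel _ (by simp))]
  let φ := Ideal.Quotient.liftₐ I (aeval bottGen) fun p hp =>
    hI.trans_le span_le_ker_aeval_bottGen hp
  have hφ (i : Fin 3) : φ (Ideal.Quotient.mk I (X i)) = bottGen i := aeval_X bottGen i
  let f := (coeffω₀ω₁.comp φ.toRingHom.toAddMonoidHom).toZModLinearMap 2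
  let g := (coeffω₀ω₁ω₂.comp φ.toRingHom.toAddMonoidHom).toZModLinearMap 2
  intro h
  apply_fun fun t => TensorProduct.lid (ZMod 2) (ZMod 2) (TensorProduct.map f g t) at h
  rw [map_add, map_add, map_tmul, map_tmul, lid_tmul, lid_tmul, map_zero, map_zero] at h
  change coeffω₀ω₁ (φ _) • coeffω₀ω₁ω₂ (φ _) + coeffω₀ω₁ (φ _) • coeffω₀ω₁ω₂ (φ _) = 0 at h
  simp only [map_add φ, map_mul φ, hφ, coeffω₀ω₁_bottGen.1, coeffω₀ω₁_bottGen.2,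
    coeffω₀ω₁ω₂_bottGen.1, coeffω₀ω₁ω₂_bottGen.2] at h
  exact absurd h (by decide)
end

section
/- Let R = (ℤ/2)[y₁,y₂,y₃,y₄]/I where I is the ideal generated by y₁², y₂·(y₁+y₂), y₃·(y₂+y₃) and y₄·(y₁+y₂+y₄), and write ȳ_j for the image of y_j in R. Then in the tensor product R ⊗_{ℤ/2} R one has (1 ⊗ ȳ₂ + ȳ₂ ⊗ 1) · (1 ⊗ ȳ₃ + ȳ₃ ⊗ 1)^{3} · (1 ⊗ ȳ₄ + ȳ₄ ⊗ 1)^{3} ≠ 0. -/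
/-! Using ȳ₁² = 0, ȳ₂² = ȳ₁ȳ₂, ȳ₃² = ȳ₂ȳ₃, ȳ₄² = (ȳ₁ + ȳ₂)ȳ₄ and (u + v)² = u² + v², the
product expands to ȳ₁ȳ₂ȳ₃ȳ₄ ⊗ (ȳ₁ȳ₂ȳ₃ + ȳ₂ȳ₃ȳ₄ + ȳ₁ȳ₃ȳ₄) + (ȳ₁ȳ₂ȳ₃ + ȳ₂ȳ₃ȳ₄ + ȳ₁ȳ₃ȳ₄) ⊗ ȳ₁ȳ₂ȳ₃ȳ₄,
which R ⊗ R → R/(ȳ₁) ⊗ R sends to ȳ₂ȳ₃ȳ₄ ⊗ ȳ₁ȳ₂ȳ₃ȳ₄. The relations present R as a tower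
𝔽₂[ȳ₁][ȳ₂][ȳ₃][ȳ₄] of extensions S[t]/(t² - ct), so R/(ȳ₁) ⊗ R can be built explicitly as a
tower of seven such extensions. In S[t]/(t² - ct) we have x·t ≠ 0 whenever x ≠ 0, so the
product of the seven adjoined generators is nonzero. -/

open MvPolynomial TensorProduct

structure BottRelations {S : Type*} [CommRing S] (y : Fin 4 → S) : Prop where
  rel₀ : y 0 ^ 2 = 0
  rel₁ : y 1 * (y 0 + y 1) = 0
  rel₂ : y 2 * (y 1 + y 2) = 0
  rel₃ : y 3 * (y 0 + y 1 + y 3) = 0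

theorem add_mul_add_pow_three_mul_add_pow_three {S : Type*} [CommRing S] [CharP S 2]
    {a b : Fin 4 → S} (ha : BottRelations a) (hb : BottRelations b) :
    (a 1 + b 1) * (a 2 + b 2) ^ 3 * (a 3 + b 3) ^ 3 =
      a 0 * a 1 * a 2 * a 3 * (b 0 * b 1 * b 2 + b 1 * b 2 * b 3 + b 0 * b 2 * b 3)
        + (a 0 * a 1 * a 2 + a 1 * a 2 * a 3 + a 0 * a 2 * a 3) * (b 0 * b 1 * b 2 * b 3) := by
  obtain ⟨ha₀, ha₁, ha₂, ha₃⟩ := ha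
  obtain ⟨hb₀, hb₁, hb₂, hb₃⟩ := hb
  have h₁₂ : (a 1 + b 1) * (a 2 + b 2) ^ 3 =
      a 0 * a 1 * a 2 * (b 1 + b 2) + (a 1 + a 2) * (b 0 * b 1 * b 2) := by
    grind
  have h₃ : (a 3 + b 3) ^ 3 =
      a 0 * a 1 * a 3 + b 0 * b 1 * b 3 + (a 0 + a 1 + b 0 + b 1) * a 3 * b 3 := by
    grind
  rw [h₁₂, h₃]
  grind

section Quotient

variable (k : Type*) [CommRing k]

noncomputable def bottIdeal : Ideal (MvPolynomial (Fin 4) k) :=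
  Ideal.span {X 0 ^ 2, X 1 * (X 0 + X 1), X 2 * (X 1 + X 2), X 3 * (X 0 + X 1 + X 3)}

variable {k} {S : Type*} [CommRing S] [Algebra k S] {y : Fin 4 → S}

theorem BottRelations.bottIdeal_le_ker (h : BottRelations y) :
    bottIdeal k ≤ RingHom.ker (aeval (R := k) y) := by
  refine Ideal.span_le.2 ?_
  rintro p (rfl | rfl | rfl | rfl) <;>
    simp only [SetLike.mem_coe, RingHom.mem_ker, map_mul, map_add, map_pow, aeval_X]
  exacts [h.rel₀, h.rel₁, h.rel₂, h.rel₃]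

noncomputable def BottRelations.lift (h : BottRelations y) :
    (MvPolynomial (Fin 4) k ⧸ bottIdeal k) →ₐ[k] S :=
  Ideal.Quotient.liftₐ _ (aeval y) fun _ hp => h.bottIdeal_le_ker hp

@[simp]
theorem BottRelations.lift_mk_X (h : BottRelations y) (i : Fin 4) :
    h.lift (Ideal.Quotient.mk (bottIdeal k) (X i)) = y i :=
  aeval_X y i

end Quotient

/-- `R[t]/(t² - c t)`. It is a `def`, not an `abbrev`, so that instance search finds only the
`CommRing` instance and not the separate `Zero`, `Mul`, … instances of `QuadraticAlgebra`. In a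
tower of these rings, mismatched instance paths make unification blow up. -/
def QuadExt (R : Type*) [CommRing R] (c : R) : Type _ := QuadraticAlgebra R 0 c

namespace QuadExt

open QuadraticAlgebra

variable {R : Type*} [CommRing R] {c : R}

instance : CommRing (QuadExt R c) := inferInstanceAs (CommRing (QuadraticAlgebra R 0 c))

instance {S : Type*} [CommSemiring S] [Algebra S R] : Algebra S (QuadExt R c) :=
  inferInstanceAs (Algebra S (QuadraticAlgebra R 0 c))

instance {S T : Type*} [CommSemiring S] [CommSemiring T] [Algebra S T] [Algebra S R]
    [Algebra T R] [IsScalarTower S T R] : IsScalarTower S T (QuadExt R c) :=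
  .of_algebraMap_eq fun x => by
    show (⟨algebraMap S R x, 0⟩ : QuadraticAlgebra R 0 c) = ⟨algebraMap T R (algebraMap S T x), 0⟩
    rw [← IsScalarTower.algebraMap_apply]

instance (p : ℕ) [CharP R p] : CharP (QuadExt R c) p :=
  charP_of_injective_algebraMap (algebraMap_injective (a := (0 : R)) (b := c)) p

def gen : QuadExt R c := (ω : QuadraticAlgebra R 0 c)

theorem gen_mul_algebraMap_add_gen [CharP R 2] :
    (gen : QuadExt R c) * (algebraMap R _ c + gen) = 0 := by
  show (ω : QuadraticAlgebra R 0 c) * (⟨c, 0⟩ + ω) = 0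
  ext <;> simp [CharTwo.add_self_eq_zero]

theorem gen_sq : (gen : QuadExt R 0) ^ 2 = 0 := by
  rw [sq]
  exact omega_mul_omega_eq_mk

theorem algebraMap_mul_gen_ne_zero {x : R} (hx : x ≠ 0) :
    algebraMap R (QuadExt R c) x * gen ≠ 0 := by
  intro h
  have := congrArg QuadraticAlgebra.im (show (⟨x, 0⟩ * ω : QuadraticAlgebra R 0 c) = 0 from h)
  exact hx (by simpa using this)

theorem gen_ne_zero [Nontrivial R] : (gen : QuadExt R c) ≠ 0 := by
  simpa using algebraMap_mul_gen_ne_zero (c := c) (one_ne_zero (α := R))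

end QuadExt

namespace BottModel

open QuadExt

-- `A₄` is `R`, with the generator of `Aⱼ` as `ȳⱼ`; `B₄` adjoins to it a copy of `R/(ȳ₁)`.
-- `a` and `b` are the images of the `ȳⱼ` of the two copies.

abbrev A₁ := QuadExt (ZMod 2) 0
abbrev A₂ := QuadExt A₁ gen
abbrev A₃ := QuadExt A₂ gen
abbrev A₄ := QuadExt A₃ (algebraMap A₁ A₃ gen + algebraMap A₂ A₃ gen)
abbrev B₂ := QuadExt A₄ 0
abbrev B₃ := QuadExt B₂ gen
abbrev B₄ := QuadExt B₃ (algebraMap B₂ B₃ gen)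

def a : Fin 4 → B₄ :=
  ![algebraMap A₁ B₄ gen, algebraMap A₂ B₄ gen, algebraMap A₃ B₄ gen, algebraMap A₄ B₄ gen]

def b : Fin 4 → B₄ := ![0, algebraMap B₂ B₄ gen, algebraMap B₃ B₄ gen, gen]

theorem b_zero : b 0 = 0 := rfl

theorem bottRelations_a : BottRelations a where
  rel₀ := by simp only [a, Matrix.cons_val, ← map_pow, gen_sq, map_zero]
  rel₁ := by
    simp only [a, Matrix.cons_val, IsScalarTower.algebraMap_apply A₁ A₂ B₄, ← map_add, ← map_mul,
      gen_mul_algebraMap_add_gen, map_zero]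
  rel₂ := by
    simp only [a, Matrix.cons_val, IsScalarTower.algebraMap_apply A₂ A₃ B₄, ← map_add, ← map_mul,
      gen_mul_algebraMap_add_gen, map_zero]
  rel₃ := by
    simp only [a, Matrix.cons_val, IsScalarTower.algebraMap_apply A₁ A₃ B₄,
      IsScalarTower.algebraMap_apply A₂ A₃ B₄, IsScalarTower.algebraMap_apply A₃ A₄ B₄, ← map_add,
      ← map_mul, gen_mul_algebraMap_add_gen, map_zero]

theorem bottRelations_b : BottRelations b where
  rel₀ := by simp [b]
  rel₁ := by simp only [b, Matrix.cons_val, zero_add, ← sq, ← map_pow, gen_sq, map_zero]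
  rel₂ := by
    simp only [b, Matrix.cons_val, IsScalarTower.algebraMap_apply B₂ B₃ B₄, ← map_add, ← map_mul,
      gen_mul_algebraMap_add_gen, map_zero]
  rel₃ := by
    simp only [b, Matrix.cons_val, zero_add, IsScalarTower.algebraMap_apply B₂ B₃ B₄,
      gen_mul_algebraMap_add_gen]

theorem prod_a_mul_prod_b_ne_zero : a 0 * a 1 * a 2 * a 3 * (b 1 * b 2 * b 3) ≠ 0 := by
  have h : a 0 * a 1 * a 2 * a 3 * (b 1 * b 2 * b 3) =
      algebraMap B₃ B₄ (algebraMap B₂ B₃ (algebraMap A₄ B₂ (algebraMap A₃ A₄ (algebraMap A₂ A₃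
        (algebraMap A₁ A₂ gen * gen) * gen) * gen) * gen) * gen) * gen := by
    simp only [a, b, Matrix.cons_val, map_mul, ← IsScalarTower.algebraMap_apply]
    ring
  rw [h]
  iterate 6 refine algebraMap_mul_gen_ne_zero ?_
  exact gen_ne_zero

end BottModel

open BottModel in
theorem stmt_16 (I : Ideal (MvPolynomial (Fin 4) (ZMod 2)))
    (hI : I = Ideal.span {X 0 ^ 2, X 1 * (X 0 + X 1), X 2 * (X 1 + X 2), X 3 * (X 0 + X 1 + X 3)}) :
    ((1 : MvPolynomial (Fin 4) (ZMod 2) ⧸ I) ⊗ₜ[ZMod 2] (Ideal.Quotient.mk I (X 1))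
        + (Ideal.Quotient.mk I (X 1)) ⊗ₜ[ZMod 2] 1)
      * ((1 : MvPolynomial (Fin 4) (ZMod 2) ⧸ I) ⊗ₜ[ZMod 2] (Ideal.Quotient.mk I (X 2))
        + (Ideal.Quotient.mk I (X 2)) ⊗ₜ[ZMod 2] 1) ^ 3
      * ((1 : MvPolynomial (Fin 4) (ZMod 2) ⧸ I) ⊗ₜ[ZMod 2] (Ideal.Quotient.mk I (X 3))
        + (Ideal.Quotient.mk I (X 3)) ⊗ₜ[ZMod 2] 1) ^ 3 ≠ 0 := by
  obtain rfl : I = bottIdeal (ZMod 2) := hI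
  intro h
  have h' := congrArg
    (Algebra.TensorProduct.lift bottRelations_b.lift bottRelations_a.lift fun _ _ => .all _ _) h
  simp only [map_mul, map_pow, map_add, map_zero, map_one, Algebra.TensorProduct.lift_tmul,
    BottRelations.lift_mk_X, one_mul, mul_one] at h'
  rw [add_mul_add_pow_three_mul_add_pow_three bottRelations_a bottRelations_b] at h'
  simp only [b_zero, zero_mul, mul_zero, zero_add, add_zero] at h'
  exact prod_a_mul_prod_b_ne_zero h'
end

section
/- Let R = (ℤ/2)[y₁,y₂,y₃,y₄]/I where I is the ideal generated by y₁², y₂·(y₁+y₂), y₃·(y₂+y₃) and y₄·(y₂+y₃+y₄), and write ȳ_j for the image of y_j in R. Then in the tensor product R ⊗_{ℤ/2} R one has (1 ⊗ ȳ₂ + ȳ₂ ⊗ 1) · (1 ⊗ ȳ₃ + ȳ₃ ⊗ 1)^{3} · (1 ⊗ ȳ₄ + ȳ₄ ⊗ 1)^{3} ≠ 0. -/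
/-!
Map `R ⊗ R` to `H4 ⊗ H4`, where `H4` is an explicit model of `R` (an iterated quadratic algebra
over `ℤ/2`), sending `ȳⱼ ⊗ 1 ↦ yⱼ ⊗ 1` except `ȳ₄ ⊗ 1 ↦ 0`, and `1 ⊗ ȳⱼ ↦ 1 ⊗ yⱼ`. Since
`y₃ y₄³ = 0` and `y₂ y₃³ = 0` in `H4`, the image of the product collapses to the pure tensor
`y₃³ ⊗ y₂ y₄³ = y₁y₂y₃ ⊗ y₁y₂y₃y₄`, which is nonzero because both factors are.
-/

open MvPolynomial TensorProduct

theorem TensorProduct.tmul_ne_zero_s17 {R M N : Type*} [CommSemiring R] [NoZeroDivisors R]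
    [AddCommMonoid M] [Module R M] [Module.Projective R M]
    [AddCommMonoid N] [Module R N] [Module.Projective R N]
    {m : M} {n : N} (hm : m ≠ 0) (hn : n ≠ 0) : m ⊗ₜ[R] n ≠ 0 := by
  obtain ⟨f, hf⟩ := Module.Projective.exists_dual_ne_zero R hm
  obtain ⟨g, hg⟩ := Module.Projective.exists_dual_ne_zero R hn
  intro h
  have := congrArg (TensorProduct.lift ((LinearMap.mul R R).compl₁₂ f g)) h
  simp only [lift.tmul, LinearMap.compl₁₂_apply, LinearMap.mul_apply', map_zero] at this
  exact mul_ne_zero hf hg this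

namespace Algebra.TensorProduct

variable {R A B : Type*} [CommSemiring R] [Semiring A] [Algebra R A] [Semiring B] [Algebra R B]

theorem one_tmul_add_tmul_one_mul_tmul_of_mul_eq_zero_left {a u : A} (b v : B) (h : a * u = 0) :
    (1 ⊗ₜ[R] b + a ⊗ₜ 1) * (u ⊗ₜ v) = u ⊗ₜ (b * v) := by
  rw [add_mul, tmul_mul_tmul, tmul_mul_tmul, h, zero_tmul, add_zero, one_mul]

theorem one_tmul_add_tmul_one_pow_mul_tmul_of_mul_eq_zero_right (a u : A) {b v : B}
    (h : b * v = 0) (n : ℕ) :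
    (1 ⊗ₜ[R] b + a ⊗ₜ 1) ^ n * (u ⊗ₜ v) = (a ^ n * u) ⊗ₜ v := by
  induction n with
  | zero => simp
  | succ n ih => rw [pow_succ', mul_assoc, ih, add_mul, tmul_mul_tmul, tmul_mul_tmul, h,
      tmul_zero, zero_add, one_mul, pow_succ', mul_assoc]

theorem one_tmul_add_tmul_one_mul_pow_mul_one_tmul_pow {a₁ a₂ : A} {b₂ b₃ : B} (b₁ : B)
    {m n : ℕ} (ha : a₁ * a₂ ^ m = 0) (hb : b₂ * b₃ ^ n = 0) :
    (1 ⊗ₜ[R] b₁ + a₁ ⊗ₜ 1) * (1 ⊗ₜ b₂ + a₂ ⊗ₜ 1) ^ m * (1 ⊗ₜ b₃) ^ n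
      = (a₂ ^ m) ⊗ₜ (b₁ * b₃ ^ n) := by
  have h := one_tmul_add_tmul_one_pow_mul_tmul_of_mul_eq_zero_right (R := R) a₂ (1 : A) hb m
  rw [mul_one] at h
  rw [tmul_pow, one_pow, mul_assoc, h, one_tmul_add_tmul_one_mul_tmul_of_mul_eq_zero_left _ _ ha]

end Algebra.TensorProduct

theorem one_tmul_add_tmul_one_mul_pow_mul_pow_ne_zero {K S A : Type*} [Field K] [CommRing S]
    [Algebra K S] [CommRing A] [Algebra K A] (f g : S →ₐ[K] A) {s₁ s₂ s₃ : S} {m n : ℕ}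
    (hf₃ : f s₃ = 0) (hf : f s₁ * f s₂ ^ m = 0) (hg : g s₂ * g s₃ ^ n = 0)
    (hf_ne : f s₂ ^ m ≠ 0) (hg_ne : g s₁ * g s₃ ^ n ≠ 0) :
    (1 ⊗ₜ[K] s₁ + s₁ ⊗ₜ 1) * (1 ⊗ₜ s₂ + s₂ ⊗ₜ 1) ^ m * (1 ⊗ₜ s₃ + s₃ ⊗ₜ 1) ^ n ≠ 0 := by
  intro h
  have := congrArg (Algebra.TensorProduct.map f g) h
  simp only [map_mul, map_pow, map_add, Algebra.TensorProduct.map_tmul, map_one, map_zero, hf₃,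
    zero_tmul, add_zero,
    Algebra.TensorProduct.one_tmul_add_tmul_one_mul_pow_mul_one_tmul_pow _ hf hg] at this
  exact TensorProduct.tmul_ne_zero_s17 hf_ne hg_ne this

namespace BottManifold

def SatisfiesRelations {A : Type*} [CommRing A] (x : Fin 4 → A) : Prop :=
  x 0 ^ 2 = 0 ∧ x 1 * (x 0 + x 1) = 0 ∧ x 2 * (x 1 + x 2) = 0 ∧ x 3 * (x 1 + x 2 + x 3) = 0

theorem aeval_eq_zero_of_mem_span {A : Type*} [CommRing A] [Algebra (ZMod 2) A]
    {x : Fin 4 → A} (hx : SatisfiesRelations x) :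
    ∀ p ∈ Ideal.span ({X 0 ^ 2, X 1 * (X 0 + X 1), X 2 * (X 1 + X 2), X 3 * (X 1 + X 2 + X 3)} :
      Set (MvPolynomial (Fin 4) (ZMod 2))), aeval x p = 0 := by
  obtain ⟨h₀, h₁, h₂, h₃⟩ := hx
  intro p hp
  refine (Ideal.span_le (I := RingHom.ker (aeval x)).mpr ?_) hp
  rintro _ (rfl | rfl | rfl | rfl | rfl) <;> simpa

open QuadraticAlgebra

/- `H4` is `ℤ/2[y₁, y₂, y₃, y₄]` modulo `yⱼ² = cⱼ yⱼ`, built one quadratic extension at a time: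
`c₁ = 0`, `c₂ = y₁`, `c₃ = y₂`, `c₄ = y₂ + y₃`; in each step `yⱼ` is `ω`. Indices are shifted:
`y 0` is `y₁`. -/
abbrev H1 := QuadraticAlgebra (ZMod 2) 0 0
abbrev H2 := QuadraticAlgebra H1 0 ω
abbrev H3 := QuadraticAlgebra H2 0 ω
abbrev H4 := QuadraticAlgebra H3 0 (algebraMap H2 H3 ω + ω)

def y : Fin 4 → H4 := ![algebraMap H1 H4 ω, algebraMap H2 H4 ω, algebraMap H3 H4 ω, ω]

def y' : Fin 4 → H4 := ![y 0, y 1, y 2, 0]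

theorem satisfiesRelations_y : SatisfiesRelations y := by
  refine ⟨?_, ?_, ?_, ?_⟩ <;> decide

theorem satisfiesRelations_y' : SatisfiesRelations y' := by
  refine ⟨?_, ?_, ?_, ?_⟩ <;> decide

end BottManifold

open BottManifold in
theorem stmt_17 (I : Ideal (MvPolynomial (Fin 4) (ZMod 2)))
    (hI : I = Ideal.span {X 0 ^ 2, X 1 * (X 0 + X 1), X 2 * (X 1 + X 2), X 3 * (X 1 + X 2 + X 3)}) :
    ((1 : MvPolynomial (Fin 4) (ZMod 2) ⧸ I) ⊗ₜ[ZMod 2] (Ideal.Quotient.mk I (X 1))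
        + (Ideal.Quotient.mk I (X 1)) ⊗ₜ[ZMod 2] 1)
      * ((1 : MvPolynomial (Fin 4) (ZMod 2) ⧸ I) ⊗ₜ[ZMod 2] (Ideal.Quotient.mk I (X 2))
        + (Ideal.Quotient.mk I (X 2)) ⊗ₜ[ZMod 2] 1) ^ 3
      * ((1 : MvPolynomial (Fin 4) (ZMod 2) ⧸ I) ⊗ₜ[ZMod 2] (Ideal.Quotient.mk I (X 3))
        + (Ideal.Quotient.mk I (X 3)) ⊗ₜ[ZMod 2] 1) ^ 3 ≠ 0 := by
  subst hI
  let f := Ideal.Quotient.liftₐ _ (aeval (R := ZMod 2) y') (aeval_eq_zero_of_mem_span satisfiesRelations_y')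
  let g := Ideal.Quotient.liftₐ _ (aeval (R := ZMod 2) y) (aeval_eq_zero_of_mem_span satisfiesRelations_y)
  have hf : ∀ i, f (Ideal.Quotient.mk _ (X i)) = y' i := fun i => aeval_X _ i
  have hg : ∀ i, g (Ideal.Quotient.mk _ (X i)) = y i := fun i => aeval_X _ i
  apply one_tmul_add_tmul_one_mul_pow_mul_pow_ne_zero f g <;> simp only [hf, hg] <;> decide
end
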